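/- arXiv:2204.02366 — 6 statements merged into one kernel-verified Lean document; each statement's English description precedes it below -/
import Mathlib

section
/- Let J(x) = f(G(x)) where G(x) = (1/N)·∑_{i=1}^N g_i(x_i), the x_i range over sets X_i, and f(y) = ∑_{j=1}^M f_j(y_j) with each f_j being L_j-Lipschitz on the convex hull of S_j = (1/N)∑_i g_{ij}(X_i). If each range set S_{ij} = g_{ij}(X_i) has diameter at most d_{ij}, then for every agent index i, every x_{-i}, and every pair x_i, x_i' ∈ X_i, we have |J(x_i', x_{-i}) − J(x_i, x_{-i})| ≤ C_0/N, where C_0 = ∑_{j=1}^M L_j · max_{1≤i≤N} d_{ij}. -/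
open Finset

/-- one-coordinate variation bound for the aggregative cost
`J(x) = ∑_j f_j((1/N) ∑_i g_{ij}(x_i))`. -/
theorem coordinate_variation_bound
    {N M : ℕ}
    {X : Fin N → Type*} {E : Fin M → Type*}
    [∀ j, NormedAddCommGroup (E j)] [∀ j, InnerProductSpace ℝ (E j)]
    (g : ∀ (i : Fin N) (j : Fin M), X i → E j)
    (f : ∀ j, E j → ℝ) (L : Fin M → NNReal) (d : Fin N → Fin M → ℝ)
    (hLip : ∀ j, LipschitzOnWith (L j) (f j)
      (convexHull ℝ (Set.range fun x : (∀ i, X i) => (N : ℝ)⁻¹ • ∑ i, g i j (x i))))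
    (hd : ∀ i j (a b : X i), ‖g i j a - g i j b‖ ≤ d i j) :
    ∀ (i : Fin N) (x : ∀ i', X i') (xi' : X i),
      |(∑ j, f j ((N : ℝ)⁻¹ • ∑ i', g i' j (Function.update x i xi' i'))) -
          (∑ j, f j ((N : ℝ)⁻¹ • ∑ i', g i' j (x i')))| ≤
        (∑ j, (L j : ℝ) * Finset.univ.sup' ⟨i, Finset.mem_univ i⟩ fun i' => d i' j) / N := by
  intro i x xi'
  have hNpos : 0 < N := i.pos
  have hNR : (0 : ℝ) < N := by exact_mod_cast hNpos
  have key : ∀ j : Fin M,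
      |f j ((N : ℝ)⁻¹ • ∑ i', g i' j (Function.update x i xi' i')) -
        f j ((N : ℝ)⁻¹ • ∑ i', g i' j (x i'))| ≤
      ((L j : ℝ) * Finset.univ.sup' ⟨i, Finset.mem_univ i⟩ fun i' => d i' j) / N := by
    intro j
    set s := convexHull ℝ (Set.range fun x : (∀ i, X i) => (N : ℝ)⁻¹ • ∑ i, g i j (x i))
    have h1 : ((N : ℝ)⁻¹ • ∑ i', g i' j (Function.update x i xi' i')) ∈ s :=
      subset_convexHull ℝ _ ⟨Function.update x i xi', rfl⟩
    have h2 : ((N : ℝ)⁻¹ • ∑ i', g i' j (x i')) ∈ s :=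
      subset_convexHull ℝ _ ⟨x, rfl⟩
    have hdist := (hLip j).dist_le_mul _ h1 _ h2
    rw [Real.dist_eq] at hdist
    refine hdist.trans ?_
    rw [dist_eq_norm, ← smul_sub, ← Finset.sum_sub_distrib]
    have hsum : (∑ i', (g i' j (Function.update x i xi' i') - g i' j (x i'))) =
        g i j xi' - g i j (x i) := by
      rw [Finset.sum_eq_single i]
      · simp
      · intro b _ hb; simp [Function.update_of_ne hb]
      · simp
    rw [hsum, norm_smul, norm_inv, Real.norm_natCast, div_eq_mul_inv, mul_comm ((L j : ℝ) * _),
      mul_left_comm]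
    gcongr
    exact (hd i j xi' (x i)).trans (Finset.le_sup' (fun i' => d i' j) (Finset.mem_univ i))
  calc |(∑ j, f j ((N : ℝ)⁻¹ • ∑ i', g i' j (Function.update x i xi' i'))) -
          (∑ j, f j ((N : ℝ)⁻¹ • ∑ i', g i' j (x i')))|
      = |∑ j, (f j ((N : ℝ)⁻¹ • ∑ i', g i' j (Function.update x i xi' i')) -
          f j ((N : ℝ)⁻¹ • ∑ i', g i' j (x i')))| := by rw [Finset.sum_sub_distrib]
    _ ≤ ∑ j, |f j ((N : ℝ)⁻¹ • ∑ i', g i' j (Function.update x i xi' i')) -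
          f j ((N : ℝ)⁻¹ • ∑ i', g i' j (x i'))| := Finset.abs_sum_le_sum_abs _ _
    _ ≤ ∑ j, ((L j : ℝ) * Finset.univ.sup' ⟨i, Finset.mem_univ i⟩ fun i' => d i' j) / N :=
        Finset.sum_le_sum fun j _ => key j
    _ = (∑ j, (L j : ℝ) * Finset.univ.sup' ⟨i, Finset.mem_univ i⟩ fun i' => d i' j) / N := by
        rw [Finset.sum_div]
end

section
/- Under the same assumptions as the relaxation gap estimate, the randomization gap satisfies J* − 𝒥* ≤ C_1/(2N), where J* and 𝒥* are the values of the original and relaxed problems and C_1 = (1/N)∑_{j=1}^M L̃_j ∑_{i=1}^N d_{ij}². -/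
open Finset
open scoped RealInnerProductSpace

/-!
Derandomize one coordinate at a time. Replacing `μ_i` by a Dirac mass `δ_a` moves the `j`-th
aggregate by at most `d_ij / N`; averaging the descent lemma
`f y ≤ f ȳ + ⟪∇f ȳ, y - ȳ⟫ + L/2 ‖y - ȳ‖²` over `a ∼ μ_i` kills the linear term, so some `a`
raises the relaxed objective by at most `∑_j L̃_j d_ij² / (2N²)`. After `N` steps the tuple is
pure, which gives `J* ≤ 𝒥* + C₁ / (2N)`.
-/

/-- A finitely supported probability measure, encoded as a `Finsupp` of weights. -/
def IsFinProb {Ω : Type*} (μ : Ω →₀ ℝ) : Prop :=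
  (∀ x, 0 ≤ μ x) ∧ μ.sum (fun _ w => w) = 1

/-- Expectation of `F` under a finitely supported measure `μ`. -/
noncomputable def expFS {Ω E : Type*} [AddCommMonoid E] [Module ℝ E]
    (μ : Ω →₀ ℝ) (F : Ω → E) : E :=
  μ.sum fun x w => w • F x

section expFS

variable {Ω V : Type*} [AddCommGroup V] [Module ℝ V] {μ : Ω →₀ ℝ}

theorem expFS_eq_sum (μ : Ω →₀ ℝ) (F : Ω → V) : expFS μ F = ∑ a ∈ μ.support, μ a • F a := rfl

theorem IsFinProb.sum_eq_one (hμ : IsFinProb μ) : ∑ a ∈ μ.support, μ a = 1 := hμ.2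

theorem isFinProb_single (a : Ω) : IsFinProb (Finsupp.single a (1 : ℝ)) := by
  classical
  refine ⟨fun x => ?_, Finsupp.sum_single_index rfl⟩
  rw [Finsupp.single_apply]
  split_ifs <;> norm_num

theorem expFS_single (a : Ω) (F : Ω → V) : expFS (Finsupp.single a (1 : ℝ)) F = F a := by
  rw [expFS, Finsupp.sum_single_index (by simp), one_smul]

theorem expFS_smul (μ : Ω →₀ ℝ) (c : ℝ) (F : Ω → V) :
    expFS μ (fun a => c • F a) = c • expFS μ F := by
  simp only [expFS_eq_sum, smul_sum, smul_comm c]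

theorem expFS_sum {ι : Type*} (μ : Ω →₀ ℝ) (s : Finset ι) (F : ι → Ω → V) :
    expFS μ (fun a => ∑ j ∈ s, F j a) = ∑ j ∈ s, expFS μ (F j) := by
  simp only [expFS_eq_sum, smul_sum]
  exact sum_comm

theorem map_expFS {W 𝓕 : Type*} [AddCommGroup W] [Module ℝ W] [FunLike 𝓕 V W]
    [LinearMapClass 𝓕 ℝ V W] (L : 𝓕) (μ : Ω →₀ ℝ) (F : Ω → V) :
    L (expFS μ F) = expFS μ (fun a => L (F a)) := by
  simp only [expFS_eq_sum, map_sum, map_smul]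

theorem expFS_const (hμ : IsFinProb μ) (v : V) : expFS μ (fun _ => v) = v := by
  rw [expFS_eq_sum, ← sum_smul, hμ.sum_eq_one, one_smul]

theorem expFS_add_const (hμ : IsFinProb μ) (F : Ω → V) (v : V) :
    expFS μ (fun a => F a + v) = expFS μ F + v := by
  simp only [expFS_eq_sum, smul_add, sum_add_distrib, ← sum_smul, hμ.sum_eq_one, one_smul]

theorem expFS_sub_const (hμ : IsFinProb μ) (F : Ω → V) (v : V) :
    expFS μ (fun a => F a - v) = expFS μ F - v := by
  simpa only [← sub_eq_add_neg] using expFS_add_const hμ F (-v)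

theorem IsFinProb.support_nonempty (hμ : IsFinProb μ) : μ.support.Nonempty := by
  by_contra h
  simpa [not_nonempty_iff_eq_empty.mp h] using hμ.sum_eq_one

theorem expFS_mem {C : Set V} (hμ : IsFinProb μ) (hC : Convex ℝ C) {F : Ω → V}
    (hF : ∀ a, F a ∈ C) : expFS μ F ∈ C :=
  hC.sum_mem (fun a _ => hμ.1 a) hμ.sum_eq_one (fun a _ => hF a)

theorem expFS_mono (hμ : IsFinProb μ) {h h' : Ω → ℝ} (hle : ∀ a, h a ≤ h' a) :
    expFS μ h ≤ expFS μ h' :=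
  sum_le_sum fun a _ => smul_le_smul_of_nonneg_left (hle a) (hμ.1 a)

theorem exists_le_expFS (hμ : IsFinProb μ) (h : Ω → ℝ) : ∃ a, h a ≤ expFS μ h := by
  have hsum : ∑ a ∈ μ.support, μ a * h a ≤ ∑ a ∈ μ.support, μ a * expFS μ h := by
    rw [← sum_mul, hμ.sum_eq_one, one_mul]; rfl
  obtain ⟨a, ha, hle⟩ := exists_le_of_sum_le hμ.support_nonempty hsum
  exact ⟨a, le_of_mul_le_mul_left hle ((hμ.1 a).lt_of_ne (Finsupp.mem_support_iff.mp ha).symm)⟩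

end expFS

theorem norm_expFS_le {Ω W : Type*} [NormedAddCommGroup W] [NormedSpace ℝ W] {μ : Ω →₀ ℝ}
    (hμ : IsFinProb μ) {F : Ω → W} {r : ℝ} (hF : ∀ a, ‖F a‖ ≤ r) : ‖expFS μ F‖ ≤ r :=
  mem_closedBall_zero_iff.mp <|
    expFS_mem hμ (convex_closedBall 0 r) fun a => mem_closedBall_zero_iff.mpr (hF a)

theorem le_add_add_of_hasDerivAt_le_add_mul {φ φ' : ℝ → ℝ} {K : ℝ}
    (hφ : ∀ t ∈ Set.Icc (0 : ℝ) 1, HasDerivAt φ (φ' t) t)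
    (hφ' : ∀ t ∈ Set.Icc (0 : ℝ) 1, φ' t ≤ φ' 0 + K * t) :
    φ 1 ≤ φ 0 + φ' 0 + K / 2 := by
  set ψ : ℝ → ℝ := fun t => φ t - t * φ' 0 - K / 2 * t ^ 2
  have hψ : ∀ t ∈ Set.Icc (0 : ℝ) 1, HasDerivAt ψ (φ' t - φ' 0 - K * t) t := fun t ht => by
    refine (((hφ t ht).sub ((hasDerivAt_id' t).mul_const (φ' 0))).sub
      ((hasDerivAt_pow 2 t).const_mul (K / 2))).congr_deriv ?_
    ring
  have hanti : AntitoneOn ψ (Set.Icc 0 1) := by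
    refine antitoneOn_of_hasDerivWithinAt_nonpos (f' := fun t => φ' t - φ' 0 - K * t)
      (convex_Icc 0 1) (fun t ht => (hψ t ht).continuousAt.continuousWithinAt)
      (fun t ht => ?_) (fun t ht => ?_)
    all_goals rw [interior_Icc] at ht
    · exact (hψ t (Set.Ioo_subset_Icc_self ht)).hasDerivWithinAt
    · linarith [hφ' t (Set.Ioo_subset_Icc_self ht)]
  have := hanti (Set.left_mem_Icc.2 zero_le_one) (Set.right_mem_Icc.2 zero_le_one) zero_le_one
  simp only [ψ] at this
  linarith

section LipschitzGradient

variable {H : Type*} [NormedAddCommGroup H] [InnerProductSpace ℝ H] [CompleteSpace H]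
  {D : Set H} {f : H → ℝ} {F : H → H} {L : NNReal}

theorem descent_lemma (hD : Convex ℝ D)
    (hf : ∀ z ∈ D, HasGradientAt f (F z) z) (hF : LipschitzOnWith L F D)
    {x y : H} (hx : x ∈ D) (hy : y ∈ D) :
    f y ≤ f x + ⟪F x, y - x⟫ + L / 2 * ‖y - x‖ ^ 2 := by
  have hseg : ∀ t ∈ Set.Icc (0 : ℝ) 1, x + t • (y - x) ∈ D := fun t ht =>
    hD.add_smul_sub_mem hx hy ht
  have hderiv : ∀ t ∈ Set.Icc (0 : ℝ) 1,
      HasDerivAt (fun t : ℝ => f (x + t • (y - x))) ⟪F (x + t • (y - x)), y - x⟫ t := by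
    intro t ht
    have hline : HasDerivAt (fun t : ℝ => x + t • (y - x)) (y - x) t := by
      simpa using ((hasDerivAt_id t).smul_const (y - x)).const_add x
    have := (hasGradientAt_iff_hasFDerivAt.mp (hf _ (hseg t ht))).comp_hasDerivAt t hline
    simp only [InnerProductSpace.toDual_apply_apply] at this
    exact this
  -- `F x` is written as `F (x + 0 • (y - x))` so that it unifies with `φ' 0` below.
  have hgrowth : ∀ t ∈ Set.Icc (0 : ℝ) 1, ⟪F (x + t • (y - x)), y - x⟫ ≤
      ⟪F (x + (0 : ℝ) • (y - x)), y - x⟫ + L * ‖y - x‖ ^ 2 * t := by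
    intro t ht
    have hLip := hF.norm_sub_le (hseg t ht) hx
    rw [add_sub_cancel_left, norm_smul, Real.norm_of_nonneg ht.1] at hLip
    calc ⟪F (x + t • (y - x)), y - x⟫
        = ⟪F x, y - x⟫ + ⟪F (x + t • (y - x)) - F x, y - x⟫ := by rw [inner_sub_left]; ring
      _ ≤ ⟪F x, y - x⟫ + ‖F (x + t • (y - x)) - F x‖ * ‖y - x‖ := by
        gcongr; exact real_inner_le_norm _ _
      _ ≤ ⟪F x, y - x⟫ + L * (t * ‖y - x‖) * ‖y - x‖ := by gcongr
      _ = _ := by rw [zero_smul, add_zero]; ring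
  simpa [mul_div_right_comm] using le_add_add_of_hasDerivAt_le_add_mul hderiv hgrowth

theorem expFS_comp_le_of_lipschitzOnWith_gradient {Ω : Type*} {μ : Ω →₀ ℝ} (hμ : IsFinProb μ)
    (hD : Convex ℝ D) (hf : ∀ z ∈ D, HasGradientAt f (F z) z) (hF : LipschitzOnWith L F D)
    {Y : Ω → H} (hY : ∀ a, Y a ∈ D) {r : ℝ} (hr : ∀ a b, ‖Y a - Y b‖ ≤ r) :
    expFS μ (fun a => f (Y a)) ≤ f (expFS μ Y) + L / 2 * r ^ 2 := by
  set m := expFS μ Y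
  have hm : m ∈ D := expFS_mem hμ hD hY
  have hdist : ∀ a, ‖Y a - m‖ ≤ r := fun a => by
    rw [norm_sub_rev, ← expFS_sub_const hμ]
    exact norm_expFS_le hμ fun b => hr b a
  have hcentered : expFS μ (fun a => ⟪F m, Y a - m⟫) = 0 :=
    calc expFS μ (fun a => ⟪F m, Y a - m⟫) = ⟪F m, expFS μ (fun a => Y a - m)⟫ :=
          (map_expFS (innerSL ℝ (F m)) μ _).symm
      _ = 0 := by rw [expFS_sub_const hμ, sub_self, inner_zero_right]
  calc expFS μ (fun a => f (Y a))
      ≤ expFS μ (fun a => ⟪F m, Y a - m⟫ + (f m + L / 2 * r ^ 2)) := by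
        refine expFS_mono hμ fun a => (descent_lemma hD hf hF hm (hY a)).trans ?_
        have := pow_le_pow_left₀ (norm_nonneg _) (hdist a) 2
        nlinarith [L.coe_nonneg]
    _ = f m + L / 2 * r ^ 2 := by rw [expFS_add_const hμ, hcentered, zero_add]

end LipschitzGradient

section PureOn

variable {ι : Type*} {X : ι → Type*}

def IsPureOn (s : Finset ι) (μ : ∀ i, X i →₀ ℝ) : Prop :=
  ∀ i ∈ s, ∃ a, μ i = Finsupp.single a 1

theorem IsPureOn.update_single [DecidableEq ι] {s t : Finset ι} {μ : ∀ i, X i →₀ ℝ}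
    (hμ : IsPureOn s μ) {i : ι} (hts : t ⊆ insert i s) (a : X i) :
    IsPureOn t (Function.update μ i (Finsupp.single a 1)) := by
  intro k hk
  rcases eq_or_ne k i with rfl | hki
  · exact ⟨a, Function.update_self ..⟩
  · rw [Function.update_of_ne hki]
    exact hμ k ((mem_insert.1 (hts hk)).resolve_left hki)

theorem isFinProb_update [DecidableEq ι] {μ : ∀ i, X i →₀ ℝ} (hμ : ∀ i, IsFinProb (μ i))
    {i : ι} {ν : X i →₀ ℝ} (hν : IsFinProb ν) : ∀ k, IsFinProb (Function.update μ i ν k) :=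
  (Function.forall_update_iff μ (p := fun _ ν => IsFinProb ν)).2 ⟨hν, fun k _ => hμ k⟩

end PureOn

section Relaxation

variable {N M : ℕ} {X : Fin N → Type*} {E : Fin M → Type*}

section Aggregate

variable [∀ j, AddCommGroup (E j)] [∀ j, Module ℝ (E j)] (g : ∀ i j, X i → E j)

noncomputable def relaxedAggregate (j : Fin M) (μ : ∀ i, X i →₀ ℝ) : E j :=
  (N : ℝ)⁻¹ • ∑ i, expFS (μ i) (g i j)

noncomputable def relaxedObjective (f : ∀ j, E j → ℝ) (μ : ∀ i, X i →₀ ℝ) : ℝ :=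
  ∑ j, f j (relaxedAggregate g j μ)

theorem relaxedAggregate_pure (j : Fin M) (x : ∀ i, X i) :
    relaxedAggregate g j (fun i => Finsupp.single (x i) 1) = (N : ℝ)⁻¹ • ∑ i, g i j (x i) := by
  simp only [relaxedAggregate, expFS_single]

theorem relaxedObjective_pure (f : ∀ j, E j → ℝ) (x : ∀ i, X i) :
    relaxedObjective g f (fun i => Finsupp.single (x i) 1) =
      ∑ j, f j ((N : ℝ)⁻¹ • ∑ i, g i j (x i)) := by
  simp only [relaxedObjective, relaxedAggregate_pure]

section Update

variable (j : Fin M) (μ : ∀ i, X i →₀ ℝ) (i : Fin N)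

theorem relaxedAggregate_update (ν : X i →₀ ℝ) :
    relaxedAggregate g j (Function.update μ i ν) =
      (N : ℝ)⁻¹ • (expFS ν (g i j) + ∑ k ∈ univ.erase i, expFS (μ k) (g k j)) := by
  rw [relaxedAggregate, ← add_sum_erase _ _ (mem_univ i), Function.update_self]
  congr 2
  exact sum_congr rfl fun k hk => by rw [Function.update_of_ne (ne_of_mem_erase hk)]

theorem relaxedAggregate_update_single_sub (a b : X i) :
    relaxedAggregate g j (Function.update μ i (Finsupp.single a 1)) -
        relaxedAggregate g j (Function.update μ i (Finsupp.single b 1)) =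
      (N : ℝ)⁻¹ • (g i j a - g i j b) := by
  simp only [relaxedAggregate_update, expFS_single, ← smul_sub, add_sub_add_right_eq_sub]

theorem relaxedAggregate_update_eq_expFS {ν : X i →₀ ℝ} (hν : IsFinProb ν) :
    relaxedAggregate g j (Function.update μ i ν) =
      expFS ν fun a => relaxedAggregate g j (Function.update μ i (Finsupp.single a 1)) := by
  simp only [relaxedAggregate_update, expFS_single, expFS_smul, expFS_add_const hν]

end Update

theorem relaxedAggregate_mem_convexHull (j : Fin M) {μ : ∀ i, X i →₀ ℝ}
    (hμ : ∀ i, IsFinProb (μ i)) :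
    relaxedAggregate g j μ ∈
      convexHull ℝ (Set.range fun x : (∀ i, X i) => (N : ℝ)⁻¹ • ∑ i, g i j (x i)) := by
  suffices ∀ s : Finset (Fin N), ∀ μ : ∀ i, X i →₀ ℝ, (∀ i, IsFinProb (μ i)) →
      IsPureOn sᶜ μ → relaxedAggregate g j μ ∈ convexHull ℝ _ from
    this univ μ hμ (by simp [IsPureOn])
  intro s
  induction s using Finset.induction_on with
  | empty =>
    intro μ _ hpure
    choose x hx using fun i => hpure i (mem_compl.2 (notMem_empty i))
    rw [funext hx, relaxedAggregate_pure]
    exact subset_convexHull ℝ _ ⟨x, rfl⟩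
  | insert i s _ ih =>
    intro μ hμ hpure
    rw [← Function.update_eq_self i μ, relaxedAggregate_update_eq_expFS g j μ i (hμ i)]
    refine expFS_mem (hμ i) (convex_convexHull ℝ _) fun a => ih _ (isFinProb_update hμ
      (isFinProb_single a)) (hpure.update_single (fun k hk => ?_) a)
    by_cases hki : k = i <;> simp_all

end Aggregate

section Derandomization

variable [∀ j, NormedAddCommGroup (E j)] [∀ j, InnerProductSpace ℝ (E j)]
  [∀ j, CompleteSpace (E j)] {g : ∀ i j, X i → E j} {f : ∀ j, E j → ℝ} {Df : ∀ j, E j → E j}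
  {Lt : Fin M → NNReal} {d : Fin N → Fin M → ℝ}
  (hdiff : ∀ j, ∀ y ∈ convexHull ℝ
    (Set.range fun x : (∀ i, X i) => (N : ℝ)⁻¹ • ∑ i, g i j (x i)),
    HasGradientAt (f j) (Df j y) y)
  (hgradLip : ∀ j, LipschitzOnWith (Lt j) (Df j)
    (convexHull ℝ (Set.range fun x : (∀ i, X i) => (N : ℝ)⁻¹ • ∑ i, g i j (x i))))
  (hd : ∀ i j (a b : X i), ‖g i j a - g i j b‖ ≤ d i j)
include hdiff hgradLip hd

theorem exists_relaxedObjective_update_single_le {μ : ∀ i, X i →₀ ℝ}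
    (hμ : ∀ i, IsFinProb (μ i)) (i : Fin N) :
    ∃ a : X i, relaxedObjective g f (Function.update μ i (Finsupp.single a 1)) ≤
      relaxedObjective g f μ + ∑ j, (Lt j : ℝ) / 2 * ((N : ℝ)⁻¹ * d i j) ^ 2 := by
  have hstep : ∀ j, expFS (μ i) (fun a =>
      f j (relaxedAggregate g j (Function.update μ i (Finsupp.single a 1)))) ≤
        f j (relaxedAggregate g j μ) + (Lt j : ℝ) / 2 * ((N : ℝ)⁻¹ * d i j) ^ 2 := by
    intro j
    have hspread : ∀ a b, ‖relaxedAggregate g j (Function.update μ i (Finsupp.single a 1)) -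
        relaxedAggregate g j (Function.update μ i (Finsupp.single b 1))‖ ≤ (N : ℝ)⁻¹ * d i j :=
      fun a b => by
        rw [relaxedAggregate_update_single_sub, norm_smul, Real.norm_of_nonneg (by positivity)]
        exact mul_le_mul_of_nonneg_left (hd i j a b) (by positivity)
    have := expFS_comp_le_of_lipschitzOnWith_gradient (hμ i) (convex_convexHull ℝ _) (hdiff j)
      (hgradLip j) (fun a => relaxedAggregate_mem_convexHull g j
        (isFinProb_update hμ (isFinProb_single a))) hspread
    rwa [← relaxedAggregate_update_eq_expFS g j μ i (hμ i), Function.update_eq_self] at this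
  obtain ⟨a, ha⟩ :=
    exists_le_expFS (hμ i) fun a => relaxedObjective g f (Function.update μ i (Finsupp.single a 1))
  refine ⟨a, ha.trans ?_⟩
  simp only [relaxedObjective, expFS_sum, ← sum_add_distrib]
  exact sum_le_sum fun j _ => hstep j

theorem exists_pure_relaxedObjective_le {μ : ∀ i, X i →₀ ℝ} (hμ : ∀ i, IsFinProb (μ i)) :
    ∃ x : ∀ i, X i, relaxedObjective g f (fun i => Finsupp.single (x i) 1) ≤
      relaxedObjective g f μ + ∑ i, ∑ j, (Lt j : ℝ) / 2 * ((N : ℝ)⁻¹ * d i j) ^ 2 := by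
  suffices ∀ s : Finset (Fin N), ∃ ν : ∀ i, X i →₀ ℝ, (∀ i, IsFinProb (ν i)) ∧ IsPureOn s ν ∧
      relaxedObjective g f ν ≤
        relaxedObjective g f μ + ∑ i ∈ s, ∑ j, (Lt j : ℝ) / 2 * ((N : ℝ)⁻¹ * d i j) ^ 2 by
    obtain ⟨ν, -, hpure, hle⟩ := this univ
    choose x hx using fun i => hpure i (mem_univ i)
    exact ⟨x, by rwa [← funext hx]⟩
  intro s
  induction s using Finset.induction_on with
  | empty => exact ⟨μ, hμ, fun _ h => absurd h (notMem_empty _), by simp⟩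
  | insert i s hi ih =>
    obtain ⟨ν, hν, hpure, hle⟩ := ih
    obtain ⟨a, ha⟩ := exists_relaxedObjective_update_single_le hdiff hgradLip hd hν i
    refine ⟨_, isFinProb_update hν (isFinProb_single a), hpure.update_single subset_rfl a, ?_⟩
    rw [sum_insert hi]
    linarith

end Derandomization

end Relaxation

theorem randomization_gap_estimate_general
    {N M : ℕ}
    {X : Fin N → Type*} [∀ i, Nonempty (X i)]
    {E : Fin M → Type*}
    [∀ j, NormedAddCommGroup (E j)] [∀ j, InnerProductSpace ℝ (E j)]
    [∀ j, CompleteSpace (E j)]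
    (g : ∀ (i : Fin N) (j : Fin M), X i → E j)
    (f : ∀ j, E j → ℝ) (Df : ∀ j, E j → E j)
    (Lt : Fin M → NNReal) (d : Fin N → Fin M → ℝ)
    (hdiff : ∀ j, ∀ y ∈ convexHull ℝ
      (Set.range fun x : (∀ i, X i) => (N : ℝ)⁻¹ • ∑ i, g i j (x i)),
      HasGradientAt (f j) (Df j y) y)
    (hgradLip : ∀ j, LipschitzOnWith (Lt j) (Df j)
      (convexHull ℝ (Set.range fun x : (∀ i, X i) => (N : ℝ)⁻¹ • ∑ i, g i j (x i))))
    (hd : ∀ i j (a b : X i), ‖g i j a - g i j b‖ ≤ d i j)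
    (B : Set ℝ)
    (hB : B = {r | ∃ μ : ∀ i, X i →₀ ℝ, (∀ i, IsFinProb (μ i)) ∧
        r = ∑ j, f j ((N : ℝ)⁻¹ • ∑ i, expFS (μ i) (g i j))})
    (hBdd : BddBelow B) :
    sInf (Set.range fun x : (∀ i, X i) => ∑ j, f j ((N : ℝ)⁻¹ • ∑ i, g i j (x i))) -
        sInf B ≤
      ((N : ℝ)⁻¹ * ∑ j, (Lt j : ℝ) * ∑ i, d i j ^ 2) / (2 * N) := by
  subst hB
  have hpure_mem (x : ∀ i, X i) : ∑ j, f j ((N : ℝ)⁻¹ • ∑ i, g i j (x i)) ∈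
      {r | ∃ μ : ∀ i, X i →₀ ℝ, (∀ i, IsFinProb (μ i)) ∧ r = relaxedObjective g f μ} :=
    ⟨_, fun i => isFinProb_single (x i), (relaxedObjective_pure g f x).symm⟩
  have hpureBdd := hBdd.mono (Set.range_subset_iff.2 hpure_mem)
  have hconst : ∑ i, ∑ j, (Lt j : ℝ) / 2 * ((N : ℝ)⁻¹ * d i j) ^ 2 =
      ((N : ℝ)⁻¹ * ∑ j, (Lt j : ℝ) * ∑ i, d i j ^ 2) / (2 * N) := by
    rw [sum_comm, mul_sum, sum_div]
    refine sum_congr rfl fun j _ => ?_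
    rw [mul_sum, mul_sum, sum_div]
    exact sum_congr rfl fun i _ => by ring
  rw [← hconst, sub_le_comm]
  refine le_csInf ⟨_, hpure_mem (Classical.arbitrary _)⟩ ?_
  rintro _ ⟨μ, hμ, rfl⟩
  show _ ≤ relaxedObjective g f μ
  obtain ⟨x, hx⟩ := exists_pure_relaxedObjective_le hdiff hgradLip hd hμ
  rw [relaxedObjective_pure] at hx
  linarith [csInf_le hpureBdd ⟨x, rfl⟩]

/-- the randomization gap satisfies `J* - 𝒥* ≤ C₁/(2N)`,
with `C₁ = (1/N) ∑_j L̃_j ∑_i d_{ij}²`. -/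
theorem randomization_gap_estimate
    {N M : ℕ} (hN : 0 < N)
    {X : Fin N → Type*} [∀ i, Nonempty (X i)]
    {E : Fin M → Type*}
    [∀ j, NormedAddCommGroup (E j)] [∀ j, InnerProductSpace ℝ (E j)]
    [∀ j, CompleteSpace (E j)]
    (g : ∀ (i : Fin N) (j : Fin M), X i → E j)
    (f : ∀ j, E j → ℝ) (Df : ∀ j, E j → E j)
    (Lt : Fin M → NNReal) (d : Fin N → Fin M → ℝ)
    (hdiff : ∀ j, ∀ y ∈ convexHull ℝ
      (Set.range fun x : (∀ i, X i) => (N : ℝ)⁻¹ • ∑ i, g i j (x i)),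
      HasGradientAt (f j) (Df j y) y)
    (hgradLip : ∀ j, LipschitzOnWith (Lt j) (Df j)
      (convexHull ℝ (Set.range fun x : (∀ i, X i) => (N : ℝ)⁻¹ • ∑ i, g i j (x i))))
    (hd : ∀ i j (a b : X i), ‖g i j a - g i j b‖ ≤ d i j)
    (B : Set ℝ)
    (hB : B = {r | ∃ μ : ∀ i, X i →₀ ℝ, (∀ i, IsFinProb (μ i)) ∧
        r = ∑ j, f j ((N : ℝ)⁻¹ • ∑ i, expFS (μ i) (g i j))})
    (hBdd : BddBelow B) :
    sInf (Set.range fun x : (∀ i, X i) => ∑ j, f j ((N : ℝ)⁻¹ • ∑ i, g i j (x i))) -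
        sInf B ≤
      ((N : ℝ)⁻¹ * ∑ j, (Lt j : ℝ) * ∑ i, d i j ^ 2) / (2 * N) :=
  randomization_gap_estimate_general g f Df Lt d hdiff hgradLip hd B hB hBdd
end

section
/- (Deterministic FW recursion lemma.) Let ω̄_k = 2/(k+2), let (u_k) and (γ_k) be real sequences, and let C > 0. If γ_{k+1} ≤ (1 − ω̄_k)γ_k + C ω̄_k² + u_k for all k ∈ ℕ, then for all k ≥ 1, γ_k ≤ 4C/k + ∑_{k'=0}^{k−1} ((k'+1)(k'+2)/(k(k+1))) u_{k'}. -/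
open Finset

/-- deterministic Frank-Wolfe recursion lemma. If
`γ_{k+1} ≤ (1 - ω̄_k) γ_k + C ω̄_k² + u_k` with `ω̄_k = 2/(k+2)`, then
`γ_k ≤ 4C/k + ∑_{k'<k} ((k'+1)(k'+2)/(k(k+1))) u_{k'}` for all `k ≥ 1`. -/
theorem fw_recursion_lemma
    (u γ : ℕ → ℝ) (C : ℝ) (hC : 0 < C)
    (hrec : ∀ k : ℕ, γ (k + 1) ≤
      (1 - 2 / ((k : ℝ) + 2)) * γ k + C * (2 / ((k : ℝ) + 2)) ^ 2 + u k) :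
    ∀ k : ℕ, 1 ≤ k →
      γ k ≤ 4 * C / k +
        ∑ k' ∈ Finset.range k,
          (((k' : ℝ) + 1) * ((k' : ℝ) + 2) / ((k : ℝ) * ((k : ℝ) + 1))) * u k' := by
  have key : ∀ k : ℕ, (k : ℝ) * ((k : ℝ) + 1) * γ k ≤
      4 * C * k + ∑ k' ∈ Finset.range k, ((k' : ℝ) + 1) * ((k' : ℝ) + 2) * u k' := by
    intro k
    induction k with
    | zero => simp
    | succ n ih =>
      have h2 : (0:ℝ) < (n:ℝ) + 2 := by positivity
      have h := hrec n
      have hm := mul_le_mul_of_nonneg_left h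
        (by positivity : (0:ℝ) ≤ ((n:ℝ) + 1) * ((n:ℝ) + 2))
      have h'' : ((n:ℝ) + 1) * ((n:ℝ) + 2) * γ (n + 1) ≤
          (n:ℝ) * ((n:ℝ) + 1) * γ n + 4 * C * ((n:ℝ) + 1) / ((n:ℝ) + 2)
            + ((n:ℝ) + 1) * ((n:ℝ) + 2) * u n := by
        calc ((n:ℝ) + 1) * ((n:ℝ) + 2) * γ (n + 1)
            ≤ ((n:ℝ) + 1) * ((n:ℝ) + 2) *
              ((1 - 2 / ((n : ℝ) + 2)) * γ n + C * (2 / ((n : ℝ) + 2)) ^ 2 + u n) := hm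
          _ = (n:ℝ) * ((n:ℝ) + 1) * γ n + 4 * C * ((n:ℝ) + 1) / ((n:ℝ) + 2)
                + ((n:ℝ) + 1) * ((n:ℝ) + 2) * u n := by
              field_simp; ring
      have hfrac : 4 * C * ((n:ℝ) + 1) / ((n:ℝ) + 2) ≤ 4 * C := by
        rw [div_le_iff₀ h2]; nlinarith
      rw [Finset.sum_range_succ]
      push_cast
      nlinarith [ih]
  intro k hk
  have hk0 : (0:ℝ) < (k:ℝ) := by exact_mod_cast hk
  have hD : (0:ℝ) < (k:ℝ) * ((k:ℝ) + 1) := by positivity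
  have hsum : ∑ k' ∈ Finset.range k,
      (((k' : ℝ) + 1) * ((k' : ℝ) + 2) / ((k : ℝ) * ((k : ℝ) + 1))) * u k'
      = (∑ k' ∈ Finset.range k, ((k' : ℝ) + 1) * ((k' : ℝ) + 2) * u k')
        / ((k : ℝ) * ((k : ℝ) + 1)) := by
    rw [Finset.sum_div]
    exact Finset.sum_congr rfl fun i _ => by ring
  rw [hsum]
  have h1 : γ k ≤ (4 * C * k + ∑ k' ∈ Finset.range k,
      ((k' : ℝ) + 1) * ((k' : ℝ) + 2) * u k') / ((k : ℝ) * ((k : ℝ) + 1)) := by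
    rw [le_div_iff₀ hD]
    nlinarith [key k]
  have h2 : (4 * C * k + ∑ k' ∈ Finset.range k,
      ((k' : ℝ) + 1) * ((k' : ℝ) + 2) * u k') / ((k : ℝ) * ((k : ℝ) + 1))
      = 4 * C / ((k:ℝ) + 1) + (∑ k' ∈ Finset.range k,
        ((k' : ℝ) + 1) * ((k' : ℝ) + 2) * u k') / ((k : ℝ) * ((k : ℝ) + 1)) := by
    field_simp
  have h3 : 4 * C / ((k:ℝ) + 1) ≤ 4 * C / (k:ℝ) := by
    apply div_le_div_of_nonneg_left (by positivity) hk0 (by linarith)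
  linarith [h1, h2.le, h2.ge]
end

section
/- (Strong duality for the geometric relaxation.) Assume f̃ = ∑_j f̃_j with each f̃_j lower semicontinuous and convex, dom(f̃) containing a neighborhood of conv(𝒴), and conv(𝒴) closed. Then 𝒥* = sup_{λ∈E} ( −f̃*(λ) + (1/N)∑_{i=1}^N Φ_i(λ) ), where Φ_i(λ) = inf_{x_i∈X_i} ⟨λ, g̃_i(x_i)⟩, and the supremum is attained. Moreover, given a dual maximizer λ, a point y is a minimizer of f̃ over conv(𝒴) if and only if y ∈ ∂f̃*(λ) and y ∈ (1/N)∑_i conv(𝒴_i(λ)), where 𝒴_i(λ) = argmin_{y_i∈𝒴_i}⟨λ, y_i⟩. -/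
open Finset Pointwise
open scoped RealInnerProductSpace

/-!
This is Fenchel–Rockafellar duality between `f̃` and the indicator of `C = conv 𝒴`. By linearity,
`inf_{y ∈ C} ⟪p, y⟫` splits over `C = N⁻¹ • ∑ᵢ conv 𝒴ᵢ` into `N⁻¹ ∑ᵢ Φᵢ(p)`, so the dual function is
`-f̃*(p) + inf_{y ∈ C} ⟪p, y⟫` and weak duality is Fenchel–Young. For attainment, separate the
epigraph of `f̃` from `C × (-∞, 𝒥*]`: since `f̃` is finite and lower semicontinuous on a complete
space, Baire's theorem gives the epigraph nonempty interior, which is the constraint qualification,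
and the separating hyperplane is not vertical, so it is the graph of an affine minorant `⟪λ, ·⟫ - c`
of `f̃`. At a dual maximizer `λ`, a feasible `y` is optimal iff Fenchel–Young is an equality there,
i.e. `y ∈ ∂f̃*(λ)`, and `⟪λ, y⟫ = N⁻¹ ∑ᵢ Φᵢ(λ)`; the latter forces each summand of `y` to minimize
`⟪λ, ·⟫` over `conv 𝒴ᵢ`, hence to lie in `conv 𝒴ᵢ(λ)`.
-/

open scoped Topology

section Conjugate

variable {F : Type*} [NormedAddCommGroup F] [InnerProductSpace ℝ F]

noncomputable def fenchelConj (f : F → ℝ) (p : F) : EReal :=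
  ⨆ y, ((⟪p, y⟫ - f y : ℝ) : EReal)

/-- `IsSubgradient g x y` says `y ∈ ∂g(x)`. -/
def IsSubgradient (g : F → EReal) (x y : F) : Prop :=
  ∀ p, g x + ((⟪y, p - x⟫ : ℝ) : EReal) ≤ g p

variable {f : F → ℝ}

theorem coe_inner_sub_le_fenchelConj (f : F → ℝ) (p y : F) :
    ((⟪p, y⟫ - f y : ℝ) : EReal) ≤ fenchelConj f p :=
  le_iSup (fun y => ((⟪p, y⟫ - f y : ℝ) : EReal)) y

theorem fenchelConj_le_coe_iff {p : F} {c : ℝ} :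
    fenchelConj f p ≤ c ↔ ∀ y, ⟪p, y⟫ - f y ≤ c := by
  simp only [fenchelConj, iSup_le_iff, EReal.coe_le_coe_iff]

theorem fenchelConj_ne_bot (f : F → ℝ) (p : F) : fenchelConj f p ≠ ⊥ :=
  ne_bot_of_le_ne_bot (EReal.coe_ne_bot _) (coe_inner_sub_le_fenchelConj f p 0)

theorem isSubgradient_fenchelConj_of_eq {x y : F}
    (h : fenchelConj f x = ((⟪x, y⟫ - f y : ℝ) : EReal)) : IsSubgradient (fenchelConj f) x y := by
  intro p
  rw [h, ← EReal.coe_add]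
  refine le_trans (le_of_eq ?_) (coe_inner_sub_le_fenchelConj f p y)
  rw [inner_sub_right, real_inner_comm x, real_inner_comm p]
  ring

variable [CompleteSpace F]

theorem exists_inner_sub_le_of_lt (hf : LowerSemicontinuous f) (hcv : ConvexOn ℝ Set.univ f)
    {y : F} {t : ℝ} (ht : t < f y) :
    ∃ μ c, (∀ z, ⟪μ, z⟫ - f z ≤ c) ∧ ⟪μ, y⟫ - c = t := by
  obtain ⟨l, c, hle, heq⟩ := hcv.exists_affine_le_of_lt (𝕜 := ℝ) (Set.mem_univ y) ht
    isClosed_univ (hf.lowerSemicontinuousOn _)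
  refine ⟨(InnerProductSpace.toDual ℝ F).symm l, -c, fun z => ?_, ?_⟩
  · have := hle ⟨z, Set.mem_univ z⟩
    simp only [Pi.add_apply, Set.domRestrict_apply, Function.comp_apply, RCLike.re_to_real,
      Function.const_apply] at this
    rw [InnerProductSpace.toDual_symm_apply]
    linarith
  · rw [InnerProductSpace.toDual_symm_apply, sub_neg_eq_add]
    exact heq

theorem fenchelConj_eq_of_isSubgradient (hf : LowerSemicontinuous f)
    (hcv : ConvexOn ℝ Set.univ f) {x y : F} (h : IsSubgradient (fenchelConj f) x y) :
    fenchelConj f x = ((⟪x, y⟫ - f y : ℝ) : EReal) := by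
  -- `f` is the supremum of its affine minorants `⟪μ, ·⟫ - c`, and the subgradient inequality at `μ`
  -- bounds each of them at `y` by `⟪x, y⟫ - f* x`.
  obtain ⟨μ₀, c₀, hμ₀, -⟩ := exists_inner_sub_le_of_lt hf hcv (sub_one_lt (f y))
  have hne_top : fenchelConj f x ≠ ⊤ := fun htop => by
    simpa [htop] using (h μ₀).trans (fenchelConj_le_coe_iff.2 hμ₀)
  lift fenchelConj f x to ℝ using ⟨hne_top, fenchelConj_ne_bot f x⟩ with r hr
  refine le_antisymm ?_ (hr ▸ coe_inner_sub_le_fenchelConj f x y)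
  rw [EReal.coe_le_coe_iff, le_sub_comm]
  refine le_of_forall_lt_imp_le_of_dense fun t ht => ?_
  obtain ⟨μ, c, hμ, rfl⟩ := exists_inner_sub_le_of_lt hf hcv ht
  have hsub : r + ⟪y, μ - x⟫ ≤ c := by
    rw [← EReal.coe_le_coe_iff, EReal.coe_add, hr]
    exact (h μ).trans (fenchelConj_le_coe_iff.2 hμ)
  rw [inner_sub_right, real_inner_comm μ, real_inner_comm x] at hsub
  linarith

theorem isSubgradient_fenchelConj_iff (hf : LowerSemicontinuous f)
    (hcv : ConvexOn ℝ Set.univ f) {x y : F} :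
    IsSubgradient (fenchelConj f) x y ↔ fenchelConj f x = ((⟪x, y⟫ - f y : ℝ) : EReal) :=
  ⟨fenchelConj_eq_of_isSubgradient hf hcv, isSubgradient_fenchelConj_of_eq⟩

end Conjugate

section Separation

variable {E : Type*} [AddCommGroup E] [Module ℝ E] [TopologicalSpace E]

theorem ContinuousLinearMap.eq_zero_of_forall_le {l : E →L[ℝ] ℝ} {u : ℝ} (h : ∀ x, l x ≤ u) :
    l = 0 := by
  ext x
  by_contra hx
  have := h (((u + 1) / l x) • x)
  rw [map_smul, smul_eq_mul, div_mul_cancel₀ _ hx] at this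
  linarith

variable {X : Type*} [TopologicalSpace X] {f : X → ℝ}

theorem lt_of_mem_interior_epigraph {z : X} {s : ℝ}
    (h : (z, s) ∈ interior {p : X × ℝ | f p.1 ≤ p.2}) : f z < s := by
  have hnhds : ∀ᶠ t in 𝓝 s, (z, t) ∈ interior {p : X × ℝ | f p.1 ≤ p.2} :=
    (Continuous.prodMk_right z).continuousAt.preimage_mem_nhds (isOpen_interior.mem_nhds h)
  obtain ⟨t, hts, ht⟩ := hnhds.exists_lt
  have hzt : (z, t) ∈ {p : X × ℝ | f p.1 ≤ p.2} := interior_subset ht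
  exact lt_of_le_of_lt hzt hts

theorem nonempty_interior_epigraph [BaireSpace X] [Nonempty X] (hf : LowerSemicontinuous f) :
    (interior {p : X × ℝ | f p.1 ≤ p.2}).Nonempty := by
  have hcover : ⋃ n : ℕ, f ⁻¹' Set.Iic (n : ℝ) = Set.univ :=
    Set.eq_univ_of_forall fun y => Set.mem_iUnion.2 ⟨⌈f y⌉₊, show f y ≤ _ from Nat.le_ceil _⟩
  obtain ⟨n, y, hy⟩ :=
    nonempty_interior_of_iUnion_of_closed (fun n : ℕ => hf.isClosed_preimage n) hcover
  refine ⟨(y, n + 1), interior_maximal ?_ (isOpen_interior.prod isOpen_Ioi) ⟨hy, lt_add_one _⟩⟩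
  rintro ⟨z, s⟩ ⟨hz, hs⟩
  have hzn : z ∈ f ⁻¹' Set.Iic (n : ℝ) := interior_subset hz
  exact le_trans hzn (le_of_lt (Set.mem_Ioi.1 hs))

variable {F : Type*} [NormedAddCommGroup F] [InnerProductSpace ℝ F] [CompleteSpace F] {f : F → ℝ}

theorem exists_eq_mul_inner_sub_of_epigraph {φ : StrongDual ℝ (F × ℝ)} {u : ℝ} (hφ : φ ≠ 0)
    (hle : ∀ z s, f z ≤ s → φ (z, s) ≤ u) :
    ∃ μ : F, ∃ b > 0, ∀ z s, φ (z, s) = b * (⟪μ, z⟫ - s) := by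
  set β := φ (0, 1)
  have hsplit : ∀ z s, φ (z, s) = φ (z, 0) + s * β := by
    intro z s
    have hzs : ((z, s) : F × ℝ) = (z, 0) + s • (0, 1) := by simp
    rw [hzs, map_add, map_smul, smul_eq_mul]
  -- `φ` is bounded above on the vertical rays of the epigraph, so `β ≤ 0`; if `β = 0`, then `φ` is
  -- bounded above on `F × {0}`, hence vanishes there, hence everywhere.
  have hβ : β < 0 := by
    rcases lt_trichotomy β 0 with hneg | hzero | hpos
    · exact hneg
    · have hinl : φ.comp (.inl ℝ F ℝ) = 0 :=
        ContinuousLinearMap.eq_zero_of_forall_le fun z => by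
          have := hle z (f z) le_rfl
          rwa [hsplit, hzero, mul_zero, add_zero] at this
      refine absurd (ContinuousLinearMap.ext fun ⟨z, s⟩ => ?_) hφ
      rw [hsplit, hzero, mul_zero, add_zero]
      exact DFunLike.congr_fun hinl z
    · set s := max (f 0) (u / β) + 1
      have hs : u / β < s := by linarith [le_max_right (f 0) (u / β)]
      have := hle 0 s (by linarith [le_max_left (f 0) (u / β)])
      rw [hsplit, Prod.mk_zero_zero, map_zero, zero_add] at this
      linarith [(div_lt_iff₀ hpos).1 hs]
  refine ⟨(-β)⁻¹ • (InnerProductSpace.toDual ℝ F).symm (φ.comp (.inl ℝ F ℝ)), -β, by linarith,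
    fun z s => ?_⟩
  rw [real_inner_smul_left, InnerProductSpace.toDual_symm_apply, ContinuousLinearMap.comp_apply,
    ContinuousLinearMap.inl_apply, hsplit]
  field_simp [hβ.ne]
  ring

end Separation

theorem EReal.neg_add_coe_eq_coe_iff {a : EReal} {s t : ℝ} :
    -a + s = t ↔ a = ((s - t : ℝ) : EReal) := by
  induction a using EReal.rec with
  | bot => exact iff_of_false (by simp) (EReal.bot_ne_coe _)
  | top => exact iff_of_false (by simp) (EReal.top_ne_coe _)
  | coe r =>
    rw [← EReal.coe_neg, ← EReal.coe_add, EReal.coe_eq_coe_iff, EReal.coe_eq_coe_iff]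
    constructor <;> intro h <;> linarith

section Duality

variable {F : Type*} [NormedAddCommGroup F] [InnerProductSpace ℝ F] {f : F → ℝ} {C : Set F}

theorem neg_fenchelConj_add_le_sInf (hne : C.Nonempty) {p : F} {a : ℝ}
    (ha : ∀ y ∈ C, a ≤ ⟪p, y⟫) : -fenchelConj f p + a ≤ sInf (f '' C) := by
  rcases eq_or_ne (fenchelConj f p) ⊤ with htop | htop
  · simp [htop]
  lift fenchelConj f p to ℝ using ⟨htop, fenchelConj_ne_bot f p⟩ with r hr
  rw [← EReal.coe_neg, ← EReal.coe_add, EReal.coe_le_coe_iff]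
  refine le_csInf (hne.image f) ?_
  rintro _ ⟨y, hy, rfl⟩
  linarith [fenchelConj_le_coe_iff.1 hr.ge y, ha y hy]

variable [CompleteSpace F]

theorem exists_inner_sub_le_and_add_sInf_le_inner (hf : LowerSemicontinuous f)
    (hcv : ConvexOn ℝ Set.univ f) (hC : Convex ℝ C) (hne : C.Nonempty)
    (hbdd : BddBelow (f '' C)) :
    ∃ μ c, (∀ z, ⟪μ, z⟫ - f z ≤ c) ∧ ∀ y ∈ C, c + sInf (f '' C) ≤ ⟪μ, y⟫ := by
  set J := sInf (f '' C)
  have hdisj : Disjoint (interior {p : F × ℝ | f p.1 ≤ p.2}) (C ×ˢ Set.Iic J) := by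
    refine Set.disjoint_left.2 fun ⟨z, s⟩ hint ⟨hz, hs⟩ => ?_
    have hJ : J ≤ f z := csInf_le hbdd (Set.mem_image_of_mem f hz)
    linarith [lt_of_mem_interior_epigraph hint, Set.mem_Iic.1 hs]
  obtain ⟨φ, u, hφ, hepi, hCJ⟩ := geometric_hahn_banach_of_nonempty_interior
    (by simpa using hcv.convex_epigraph) (hC.prod (convex_Iic J)) hdisj
    (nonempty_interior_epigraph hf) (hne.prod Set.nonempty_Iic)
  obtain ⟨μ, b, hb, hφμ⟩ := exists_eq_mul_inner_sub_of_epigraph hφ fun z s h => hepi (z, s) h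
  refine ⟨μ, u / b, fun z => ?_, fun y hy => ?_⟩
  · rw [le_div_iff₀' hb, ← hφμ]
    exact hepi (z, f z) (le_refl (f z))
  · have := hCJ (y, J) ⟨hy, le_refl J⟩
    rw [hφμ, ← div_le_iff₀' hb] at this
    linarith

variable {h : F → ℝ}

theorem exists_neg_fenchelConj_add_eq_sInf (hf : LowerSemicontinuous f)
    (hcv : ConvexOn ℝ Set.univ f) (hC : Convex ℝ C)
    (hh : ∀ p, IsGLB ((fun y => ⟪p, y⟫) '' C) (h p)) :
    ∃ μ, -fenchelConj f μ + h μ = sInf (f '' C) := by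
  have hne : C.Nonempty := (hh 0).nonempty.of_image
  have hbdd : BddBelow (f '' C) := by
    obtain ⟨μ₀, c₀, hμ₀, -⟩ := exists_inner_sub_le_of_lt hf hcv (sub_one_lt (f 0))
    refine ⟨h μ₀ - c₀, ?_⟩
    rintro _ ⟨y, hy, rfl⟩
    linarith [hμ₀ y, (hh μ₀).1 (Set.mem_image_of_mem _ hy)]
  obtain ⟨μ, c, hμ, hc⟩ := exists_inner_sub_le_and_add_sInf_le_inner hf hcv hC hne hbdd
  have hcJ : c + sInf (f '' C) ≤ h μ := (hh μ).2 (by rintro _ ⟨y, hy, rfl⟩; exact hc y hy)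
  refine ⟨μ, le_antisymm (neg_fenchelConj_add_le_sInf hne fun y hy => (hh μ).1 ⟨y, hy, rfl⟩) ?_⟩
  calc ((sInf (f '' C) : ℝ) : EReal) ≤ -(c : EReal) + h μ := by
        rw [← EReal.coe_neg, ← EReal.coe_add, EReal.coe_le_coe_iff]; linarith
    _ ≤ -fenchelConj f μ + h μ := by
        gcongr
        exact EReal.neg_le_neg_iff.2 (fenchelConj_le_coe_iff.2 hμ)

theorem mem_and_eq_sInf_iff_isSubgradient_fenchelConj (hf : LowerSemicontinuous f)
    (hcv : ConvexOn ℝ Set.univ f) (hh : ∀ p, IsGLB ((fun y => ⟪p, y⟫) '' C) (h p)) {ν : F}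
    (hν : -fenchelConj f ν + h ν = sInf (f '' C)) {y : F} :
    (y ∈ C ∧ f y = sInf (f '' C)) ↔
      IsSubgradient (fenchelConj f) ν y ∧ y ∈ C ∧ ⟪ν, y⟫ = h ν := by
  rw [EReal.neg_add_coe_eq_coe_iff] at hν
  rw [isSubgradient_fenchelConj_iff hf hcv, hν, EReal.coe_eq_coe_iff]
  constructor
  · rintro ⟨hy, hfy⟩
    have hle : ⟪ν, y⟫ - f y ≤ h ν - sInf (f '' C) := fenchelConj_le_coe_iff.1 hν.le y
    have hge : h ν ≤ ⟪ν, y⟫ := (hh ν).1 ⟨y, hy, rfl⟩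
    exact ⟨by linarith, hy, by linarith⟩
  · rintro ⟨heq, hy, hinner⟩
    exact ⟨hy, by linarith⟩

end Duality

theorem isGLB_fintype_sum {ι : Type*} [Fintype ι] {T : ι → Set ℝ} {a : ι → ℝ}
    (h : ∀ i, IsGLB (T i) (a i)) : IsGLB (∑ i, T i) (∑ i, a i) := by
  refine ⟨?_, fun b hb => le_of_forall_pos_lt_add fun ε hε => ?_⟩
  · intro x hx
    obtain ⟨t, ht, rfl⟩ := (Set.mem_fintype_sum _ _).1 hx
    exact Finset.sum_le_sum fun i _ => (h i).1 (ht i)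
  set δ := ε / (Fintype.card ι + 1)
  have hδ : Fintype.card ι * δ < ε := by
    rw [← mul_div_assoc, div_lt_iff₀ (by positivity)]
    linarith
  have hnear : ∀ i, ∃ t ∈ T i, t < a i + δ := fun i => by
    obtain ⟨t, ht, -, hlt⟩ :=
      (h i).exists_between (lt_add_of_pos_right (a i) (show 0 < δ by positivity))
    exact ⟨t, ht, hlt⟩
  choose t ht hlt using hnear
  calc b ≤ ∑ i, t i := hb ((Set.mem_fintype_sum _ _).2 ⟨t, ht, rfl⟩)
    _ ≤ ∑ i, (a i + δ) := Finset.sum_le_sum fun i _ => (hlt i).le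
    _ = ∑ i, a i + Fintype.card ι * δ := by
      rw [Finset.sum_add_distrib, Finset.sum_const, Finset.card_univ, nsmul_eq_mul]
    _ < ∑ i, a i + ε := by linarith

section LinearFunctional

variable {E : Type*} [AddCommGroup E] [Module ℝ E] (l : E →ₗ[ℝ] ℝ)

theorem IsGLB.image_convexHull {S : Set E} {a : ℝ} (hS : IsGLB (l '' S) a) :
    IsGLB (l '' convexHull ℝ S) a := by
  refine ⟨?_, fun b hb => hS.2 (lowerBounds_mono_set (Set.image_mono (subset_convexHull ℝ S)) hb)⟩
  rintro _ ⟨y, hy, rfl⟩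
  obtain ⟨x, hx, hxy⟩ :=
    (l.concaveOn convex_univ).exists_le_of_mem_convexHull (Set.subset_univ S) hy
  exact (hS.1 (Set.mem_image_of_mem l hx)).trans hxy

theorem isGLB_image_smul_sum {ι : Type*} [Fintype ι] {S : ι → Set E} {a : ι → ℝ}
    (hS : ∀ i, IsGLB (l '' S i) (a i)) {c : ℝ} (hc : 0 ≤ c) :
    IsGLB (l '' (c • ∑ i, S i)) (c * ∑ i, a i) := by
  rw [image_smul_set, Set.image_finsetSum, ← Set.image_smul]
  exact (isGLB_fintype_sum hS).mul_left hc

theorem mem_convexHull_argmin_of_forall_le {S : Set E} {y : E} (hy : y ∈ convexHull ℝ S)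
    (hmin : ∀ w ∈ S, l y ≤ l w) : y ∈ convexHull ℝ {z | z ∈ S ∧ ∀ w ∈ S, l z ≤ l w} := by
  classical
  obtain ⟨ι, _, w, z, hw₀, hw₁, hz, rfl⟩ := mem_convexHull_iff_exists_fintype.1 hy
  have hsum : ∑ i, w i * l (∑ j, w j • z j) = ∑ i, w i * l (z i) := by
    rw [← Finset.sum_mul, hw₁, one_mul, map_sum]
    simp only [map_smul, smul_eq_mul]
  have hterm := (Finset.sum_eq_sum_iff_of_le fun i _ =>
    mul_le_mul_of_nonneg_left (hmin _ (hz i)) (hw₀ i)).1 hsum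
  have hsupp : ∀ i, w i ≠ 0 → z i ∈ {z | z ∈ S ∧ ∀ w ∈ S, l z ≤ l w} := fun i hi =>
    ⟨hz i, fun v hv => mul_left_cancel₀ hi (hterm i (Finset.mem_univ i)) ▸ hmin v hv⟩
  rw [← Finset.sum_filter_of_ne (p := fun i => w i ≠ 0) fun i _ => left_ne_zero_of_smul]
  refine (convex_convexHull ℝ _).sum_mem (fun i _ => hw₀ i) ?_ fun i hi =>
    subset_convexHull ℝ _ (hsupp i (Finset.mem_filter.1 hi).2)
  rw [Finset.sum_filter_ne_zero, hw₁]

theorem mem_convexHull_argmin_iff {S : Set E} {a : ℝ} (hS : IsGLB (l '' S) a) {y : E} :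
    y ∈ convexHull ℝ {z | z ∈ S ∧ ∀ w ∈ S, l z ≤ l w} ↔ y ∈ convexHull ℝ S ∧ l y = a := by
  constructor
  · intro hy
    have hargmin : {z | z ∈ S ∧ ∀ w ∈ S, l z ≤ l w} ⊆ {z | l z = a} := fun z hz =>
      le_antisymm (hS.2 (by rintro _ ⟨w, hw, rfl⟩; exact hz.2 w hw))
        (hS.1 (Set.mem_image_of_mem l hz.1))
    exact ⟨convexHull_mono (fun z hz => hz.1) hy,
      convexHull_min hargmin (convex_hyperplane l.isLinear a) hy⟩
  · rintro ⟨hy, rfl⟩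
    exact mem_convexHull_argmin_of_forall_le l hy fun w hw => hS.1 (Set.mem_image_of_mem l hw)

theorem mem_sum_convexHull_argmin_iff {ι : Type*} [Fintype ι] {S : ι → Set E} {a : ι → ℝ}
    (hS : ∀ i, IsGLB (l '' S i) (a i)) {y : E} :
    y ∈ ∑ i, convexHull ℝ {z | z ∈ S i ∧ ∀ w ∈ S i, l z ≤ l w} ↔
      y ∈ ∑ i, convexHull ℝ (S i) ∧ l y = ∑ i, a i := by
  simp only [Set.mem_fintype_sum, mem_convexHull_argmin_iff l (hS _)]
  constructor
  · rintro ⟨g, hg, rfl⟩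
    refine ⟨⟨g, fun i => (hg i).1, rfl⟩, ?_⟩
    rw [map_sum]
    exact Finset.sum_congr rfl fun i _ => (hg i).2
  · rintro ⟨⟨g, hg, rfl⟩, hlg⟩
    have hle : ∀ i ∈ Finset.univ, a i ≤ l (g i) := fun i _ =>
      ((hS i).image_convexHull l).1 (Set.mem_image_of_mem l (hg i))
    rw [map_sum, eq_comm, Finset.sum_eq_sum_iff_of_le hle] at hlg
    exact ⟨g, fun i => ⟨hg i, (hlg i (Finset.mem_univ i)).symm⟩, rfl⟩

theorem mem_smul_sum_convexHull_argmin_iff {ι : Type*} [Fintype ι] {S : ι → Set E} {a : ι → ℝ}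
    (hS : ∀ i, IsGLB (l '' S i) (a i)) {c : ℝ} (hc : c ≠ 0) {y : E} :
    y ∈ c • ∑ i, convexHull ℝ {z | z ∈ S i ∧ ∀ w ∈ S i, l z ≤ l w} ↔
      y ∈ c • ∑ i, convexHull ℝ (S i) ∧ l y = c * ∑ i, a i := by
  rw [Set.mem_smul_set_iff_inv_smul_mem₀ hc, Set.mem_smul_set_iff_inv_smul_mem₀ hc,
    mem_sum_convexHull_argmin_iff l hS, map_smul, smul_eq_mul, inv_mul_eq_iff_eq_mul₀ hc]

end LinearFunctional

theorem ConvexOn.finsetSum {ι E : Type*} [AddCommGroup E] [Module ℝ E] {s : Set E}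
    {t : Finset ι} {f : ι → E → ℝ} (hs : Convex ℝ s) (hf : ∀ i ∈ t, ConvexOn ℝ s (f i)) :
    ConvexOn ℝ s fun x => ∑ i ∈ t, f i x := by
  refine ⟨hs, fun x hx y hy a b ha hb hab => ?_⟩
  simp only [smul_eq_mul, Finset.mul_sum, ← Finset.sum_add_distrib]
  exact Finset.sum_le_sum fun i hi => (hf i hi).2 hx hy ha hb hab

theorem isGLB_image_inner_range {F X : Type*} [NormedAddCommGroup F] [InnerProductSpace ℝ F]
    [Nonempty X] {g : X → F} (hg : Bornology.IsBounded (Set.range g)) (p : F) :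
    IsGLB (innerₛₗ ℝ p '' Set.range g) (sInf (Set.range fun x => ⟪p, g x⟫)) := by
  have hbdd : BddBelow (innerₛₗ ℝ p '' Set.range g) :=
    ((innerSL ℝ p).lipschitz.isBounded_image hg).bddBelow
  rw [← Set.range_comp] at hbdd ⊢
  exact isGLB_csInf (Set.range_nonempty _) hbdd

theorem strong_duality_geometric_relaxation_general
    {N M : ℕ} (hN : 0 < N)
    {X : Fin N → Type*} [∀ i, Nonempty (X i)]
    {E : Fin M → Type*}
    [∀ j, NormedAddCommGroup (E j)] [∀ j, InnerProductSpace ℝ (E j)]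
    [∀ j, CompleteSpace (E j)]
    (gt : ∀ i, X i → PiLp 2 E)
    (fj : ∀ j, E j → ℝ)
    (hlsc : ∀ j, LowerSemicontinuous (fj j))
    (hconv : ∀ j, ConvexOn ℝ Set.univ (fj j))
    (hbdd : ∀ i, Bornology.IsBounded (Set.range (gt i))) :
    -- notation
    let ft : PiLp 2 E → ℝ := fun y => ∑ j, fj j (y j)
    let Ytot : Set (PiLp 2 E) := (N : ℝ)⁻¹ • ∑ i, Set.range (gt i)
    let Jr : ℝ := sInf (ft '' convexHull ℝ Ytot)
    let fstar : PiLp 2 E → EReal := fun p => ⨆ y : PiLp 2 E, ((⟪p, y⟫ - ft y : ℝ) : EReal)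
    let Phi : ∀ i, PiLp 2 E → ℝ := fun i p => sInf (Set.range fun xi : X i => ⟪p, gt i xi⟫)
    let dualVal : PiLp 2 E → EReal :=
      fun p => -(fstar p) + (((N : ℝ)⁻¹ * ∑ i, Phi i p : ℝ) : EReal)
    -- strong duality with dual attainment
    (∃ lam : PiLp 2 E, dualVal lam = (Jr : EReal) ∧ ∀ p, dualVal p ≤ (Jr : EReal)) ∧
    -- characterization of the primal minimizers, given any dual maximizer
    (∀ lam : PiLp 2 E, dualVal lam = (Jr : EReal) →
      ∀ y : PiLp 2 E,
        (y ∈ convexHull ℝ Ytot ∧ ft y = Jr) ↔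
          ((∀ p : PiLp 2 E, fstar lam + ((⟪y, p - lam⟫ : ℝ) : EReal) ≤ fstar p) ∧
            y ∈ ((N : ℝ)⁻¹ • ∑ i, convexHull ℝ
              {yi | yi ∈ Set.range (gt i) ∧
                ∀ z ∈ Set.range (gt i), ⟪lam, yi⟫ ≤ ⟪lam, z⟫} : Set (PiLp 2 E)))) := by
  intro ft Ytot Jr fstar Phi dualVal
  have hft_lsc : LowerSemicontinuous ft :=
    lowerSemicontinuous_sum fun j _ => (hlsc j).comp (PiLp.continuous_apply 2 E j)
  have hft_conv : ConvexOn ℝ Set.univ ft :=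
    ConvexOn.finsetSum convex_univ fun j _ => (hconv j).comp_linearMap (PiLp.projₗ 2 E j)
  have hPhi : ∀ p i, IsGLB (innerₛₗ ℝ p '' Set.range (gt i)) (Phi i p) :=
    fun p i => isGLB_image_inner_range (hbdd i) p
  have hdual : ∀ p, IsGLB ((fun y => ⟪p, y⟫) '' convexHull ℝ Ytot) ((N : ℝ)⁻¹ * ∑ i, Phi i p) :=
    fun p => (isGLB_image_smul_sum _ (hPhi p) (by positivity)).image_convexHull _
  have hweak : ∀ p, dualVal p ≤ Jr := fun p =>
    neg_fenchelConj_add_le_sInf (hdual p).nonempty.of_image fun y hy => (hdual p).1 ⟨y, hy, rfl⟩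
  refine ⟨?_, fun lam hlam y => ?_⟩
  · obtain ⟨lam, hlam⟩ :=
      exists_neg_fenchelConj_add_eq_sInf hft_lsc hft_conv (convex_convexHull ℝ Ytot) hdual
    exact ⟨lam, hlam, hweak⟩
  · rw [mem_and_eq_sInf_iff_isSubgradient_fenchelConj hft_lsc hft_conv hdual hlam,
      convexHull_smul, convexHull_sum]
    exact and_congr_right' (mem_smul_sum_convexHull_argmin_iff _ (hPhi lam)
      (inv_ne_zero (Nat.cast_ne_zero.2 hN.ne'))).symm

/-- strong duality for the geometric relaxation, attainment of the
dual problem, and characterization of the minimizers of `f̃` over `conv(𝒴)`. -/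
theorem strong_duality_geometric_relaxation
    {N M : ℕ} (hN : 0 < N)
    {X : Fin N → Type*} [∀ i, Nonempty (X i)]
    {E : Fin M → Type*}
    [∀ j, NormedAddCommGroup (E j)] [∀ j, InnerProductSpace ℝ (E j)]
    [∀ j, CompleteSpace (E j)]
    (gt : ∀ i, X i → PiLp 2 E)
    (fj : ∀ j, E j → ℝ)
    (hlsc : ∀ j, LowerSemicontinuous (fj j))
    (hconv : ∀ j, ConvexOn ℝ Set.univ (fj j))
    (hbdd : ∀ i, Bornology.IsBounded (Set.range (gt i)))
    (hclosed : IsClosed (convexHull ℝ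
      ((N : ℝ)⁻¹ • ∑ i, Set.range (gt i) : Set (PiLp 2 E)))) :
    -- notation
    let ft : PiLp 2 E → ℝ := fun y => ∑ j, fj j (y j)
    let Ytot : Set (PiLp 2 E) := (N : ℝ)⁻¹ • ∑ i, Set.range (gt i)
    let Jr : ℝ := sInf (ft '' convexHull ℝ Ytot)
    let fstar : PiLp 2 E → EReal := fun p => ⨆ y : PiLp 2 E, ((⟪p, y⟫ - ft y : ℝ) : EReal)
    let Phi : ∀ i, PiLp 2 E → ℝ := fun i p => sInf (Set.range fun xi : X i => ⟪p, gt i xi⟫)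
    let dualVal : PiLp 2 E → EReal :=
      fun p => -(fstar p) + (((N : ℝ)⁻¹ * ∑ i, Phi i p : ℝ) : EReal)
    -- strong duality with dual attainment
    (∃ lam : PiLp 2 E, dualVal lam = (Jr : EReal) ∧ ∀ p, dualVal p ≤ (Jr : EReal)) ∧
    -- characterization of the primal minimizers, given any dual maximizer
    (∀ lam : PiLp 2 E, dualVal lam = (Jr : EReal) →
      ∀ y : PiLp 2 E,
        (y ∈ convexHull ℝ Ytot ∧ ft y = Jr) ↔
          ((∀ p : PiLp 2 E, fstar lam + ((⟪y, p - lam⟫ : ℝ) : EReal) ≤ fstar p) ∧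
            y ∈ ((N : ℝ)⁻¹ • ∑ i, convexHull ℝ
              {yi | yi ∈ Set.range (gt i) ∧
                ∀ z ∈ Set.range (gt i), ⟪lam, yi⟫ ≤ ⟪lam, z⟫} : Set (PiLp 2 E)))) :=
  strong_duality_geometric_relaxation_general hN gt fj hlsc hconv hbdd
end

section
/- (Variance-type McDiarmid inequality.) Let X_1,…,X_n be independent random variables valued in Ω_1,…,Ω_n and f: ∏Ω_i → ℝ measurable. Suppose there exist constants m and v_i such that for all i and all x_{-i}: Var[f(X_i, x_{-i})] ≤ v_i² and |f(X_i, x_{-i}) − E[f(X_i, x_{-i})]| ≤ m almost surely. Then for all ε > 0, P[f(X) − E[f(X)] ≥ ε] ≤ exp( −ε² / (2(∑_{i=1}^n v_i² + mε/3)) ). -/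
/-!
Realise the law of `(X_1, …, X_n)` as the product measure `μ_0 ⊗ (μ_1 ⊗ ⋯ ⊗ μ_{n-1})` and
average `f` over the first coordinate. The average `g` again satisfies both coordinatewise
hypotheses: an average of functions that stay within `m` of their means stays within `m` of its
mean, and `Var(∫ H(x, ·) dμ_0(x)) ≤ ∫ Var(H(x, ·)) dμ_0(x)`. Conditionally on the last `n - 1`
coordinates, `f` is within `m` of `g` and has variance at most `v_0²`, so Bernstein's bound
`E[exp(t(Y - EY))] ≤ exp(Var(Y) t² / (2 (1 - t m / 3)))` (valid for `t m < 3`, from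
`eˣ ≤ 1 + x + x² / (2 (1 - b / 3))` for `|x| ≤ b < 3`) peels off one factor of the moment
generating function. By induction `E[exp(t(f - Ef))] ≤ exp((∑ v_i²) t² / (2 (1 - t m / 3)))`, and
Chernoff's bound with `t = ε / (∑ v_i² + 2 m ε / 3)` gives the inequality.
-/

open Finset MeasureTheory ProbabilityTheory

open Nat in
lemma Real.exp_le_one_add_add_sq_div {x b : ℝ} (hxb : |x| ≤ b) (hb3 : b < 3) :
    Real.exp x ≤ 1 + x + x ^ 2 / (2 * (1 - b / 3)) := by
  have hb : 0 ≤ b := (abs_nonneg x).trans hxb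
  have hb0 : 0 ≤ b / 3 := by positivity
  have hb1 : b / 3 < 1 := by linarith
  have hsum := Real.summable_pow_div_factorial x
  have hterm (n : ℕ) : x ^ (n + 2) / (n + 2)! ≤ x ^ 2 / 2 * (b / 3) ^ n := by
    have hpow : x ^ (n + 2) ≤ x ^ 2 * b ^ n := by
      calc x ^ (n + 2) ≤ |x| ^ 2 * |x| ^ n := by
            rw [← pow_add, add_comm, ← abs_pow]; exact le_abs_self _
        _ ≤ x ^ 2 * b ^ n := by rw [sq_abs]; gcongr
    have hfact : (2 * 3 ^ n : ℝ) ≤ (n + 2)! := by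
      exact_mod_cast (add_comm n 2 ▸ factorial_mul_pow_le_factorial : 2! * 3 ^ n ≤ (n + 2)!)
    calc x ^ (n + 2) / (n + 2)! ≤ x ^ 2 * b ^ n / (2 * 3 ^ n) := by gcongr
      _ = x ^ 2 / 2 * (b / 3) ^ n := by rw [div_pow]; ring
  have htail : ∑' n : ℕ, x ^ (n + 2) / (n + 2)! ≤ x ^ 2 / 2 * (1 - b / 3)⁻¹ := by
    rw [← tsum_geometric_of_lt_one hb0 hb1, ← tsum_mul_left]
    exact ((summable_nat_add_iff 2).2 hsum).tsum_le_tsum hterm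
      ((summable_geometric_of_lt_one hb0 hb1).mul_left _)
  have hexp : Real.exp x = 1 + x + ∑' n : ℕ, x ^ (n + 2) / (n + 2)! := by
    rw [Real.exp_eq_exp_ℝ, NormedSpace.exp_eq_tsum_div]
    dsimp only
    rw [hsum.tsum_eq_zero_add,
      ((summable_nat_add_iff 1).2 hsum).tsum_eq_zero_add]
    simp [add_assoc]
  calc Real.exp x ≤ 1 + x + x ^ 2 / 2 * (1 - b / 3)⁻¹ := by rw [hexp]; gcongr
    _ = 1 + x + x ^ 2 / (2 * (1 - b / 3)) := by field_simp

namespace ProbabilityTheory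

variable {Ω : Type*} [MeasurableSpace Ω] {μ : Measure Ω}

lemma memLp_of_ae_abs_sub_le [IsFiniteMeasure μ] {X : Ω → ℝ} (hX : AEStronglyMeasurable X μ)
    {c m : ℝ} (hb : ∀ᵐ ω ∂μ, |X ω - c| ≤ m) (p : ENNReal) : MemLp X p μ := by
  refine MemLp.of_bound hX (|c| + m) ?_
  filter_upwards [hb] with ω hω
  calc ‖X ω‖ = |c + (X ω - c)| := by rw [Real.norm_eq_abs, add_sub_cancel]
    _ ≤ |c| + m := (abs_add_le _ _).trans (by gcongr)

lemma integrable_of_ae_abs_sub_le [IsFiniteMeasure μ] {X : Ω → ℝ}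
    (hX : AEStronglyMeasurable X μ) {c m : ℝ} (hb : ∀ᵐ ω ∂μ, |X ω - c| ≤ m) : Integrable X μ :=
  memLp_one_iff_integrable.1 (memLp_of_ae_abs_sub_le hX hb 1)

lemma integrable_exp_mul_of_ae_abs_sub_le [IsFiniteMeasure μ] {X : Ω → ℝ}
    (hX : AEMeasurable X μ) {c m : ℝ} (hb : ∀ᵐ ω ∂μ, |X ω - c| ≤ m) (t : ℝ) :
    Integrable (fun ω => Real.exp (t * X ω)) μ :=
  integrable_exp_mul_of_mem_Icc (a := c - m) (b := c + m) hX <| by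
    filter_upwards [hb] with ω hω
    constructor <;> linarith [abs_le.1 hω]

lemma sq_integral_le_integral_sq [IsProbabilityMeasure μ] {X : Ω → ℝ} (hX : MemLp X 2 μ) :
    (∫ ω, X ω ∂μ) ^ 2 ≤ ∫ ω, X ω ^ 2 ∂μ := by
  have := variance_nonneg X μ
  rw [variance_eq_sub hX] at this
  simpa [sub_nonneg] using this

lemma mgf_le_exp_variance_of_abs_sub_le [IsProbabilityMeasure μ] {X : Ω → ℝ}
    (hX : AEMeasurable X μ) {m t : ℝ} (ht : 0 ≤ t) (htm : t * m < 3)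
    (hdev : ∀ᵐ ω ∂μ, |X ω - μ[X]| ≤ m) :
    mgf X μ t ≤ Real.exp (t * μ[X] + variance X μ * t ^ 2 / (2 * (1 - t * m / 3))) := by
  set c := μ[X]
  set K := 2 * (1 - t * m / 3)
  have hXi : Integrable X μ := integrable_of_ae_abs_sub_le hX.aestronglyMeasurable hdev
  have hY : Integrable (fun ω => X ω - c) μ := hXi.sub (integrable_const c)
  have hY1 : Integrable (fun ω => 1 + t * (X ω - c)) μ := (integrable_const 1).add (hY.const_mul t)
  have hY2 : Integrable (fun ω => (X ω - c) ^ 2) μ :=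
    (memLp_of_ae_abs_sub_le (hX.sub_const c).aestronglyMeasurable (c := 0)
      (by simpa using hdev) 2).integrable_sq
  have hpt : ∀ᵐ ω ∂μ, Real.exp (t * X ω) ≤
      Real.exp (t * c) * (1 + t * (X ω - c) + t ^ 2 / K * (X ω - c) ^ 2) := by
    filter_upwards [hdev] with ω hω
    have hb : |t * (X ω - c)| ≤ t * m := by
      rw [abs_mul, abs_of_nonneg ht]; exact mul_le_mul_of_nonneg_left hω ht
    calc Real.exp (t * X ω) = Real.exp (t * c) * Real.exp (t * (X ω - c)) := by
          rw [← Real.exp_add]; congr 1; ring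
      _ ≤ _ := by
        gcongr
        exact (Real.exp_le_one_add_add_sq_div hb htm).trans_eq (by simp only [K]; ring)
  have hrhs : ∫ ω, (1 + t * (X ω - c) + t ^ 2 / K * (X ω - c) ^ 2) ∂μ =
      1 + t ^ 2 / K * variance X μ := by
    rw [integral_add hY1 (hY2.const_mul _), integral_add (integrable_const 1) (hY.const_mul t),
      integral_const_mul, integral_const_mul, integral_sub hXi (integrable_const c),
      variance_eq_integral hX]
    simp [c]
  calc mgf X μ t
      ≤ ∫ ω, Real.exp (t * c) * (1 + t * (X ω - c) + t ^ 2 / K * (X ω - c) ^ 2) ∂μ :=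
        integral_mono_of_nonneg (ae_of_all _ fun _ => (Real.exp_pos _).le)
          ((hY1.add (hY2.const_mul _)).const_mul _) hpt
    _ = Real.exp (t * c) * (1 + t ^ 2 / K * variance X μ) := by rw [integral_const_mul, hrhs]
    _ ≤ Real.exp (t * c) * Real.exp (t ^ 2 / K * variance X μ) := by
        gcongr
        linarith [Real.add_one_le_exp (t ^ 2 / K * variance X μ)]
    _ = _ := by rw [← Real.exp_add]; ring_nf

lemma measureReal_ge_le_exp_of_mgf_le [IsProbabilityMeasure μ] {X : Ω → ℝ} {m W ε : ℝ}
    (hm : 0 ≤ m) (hε : 0 ≤ ε)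
    (hint : ∀ t, Integrable (fun ω => Real.exp (t * X ω)) μ)
    (hmgf : ∀ t, 0 ≤ t → t * m < 3 →
      mgf X μ t ≤ Real.exp (t * μ[X] + W * t ^ 2 / (2 * (1 - t * m / 3)))) :
    μ.real {ω | μ[X] + ε ≤ X ω} ≤ Real.exp (-ε ^ 2 / (2 * (W + m * ε / 3))) := by
  set D := W + m * ε / 3 with hD
  rcases le_or_gt D 0 with hD0 | hD0
  · calc μ.real _ ≤ 1 := measureReal_le_one
      _ ≤ _ := Real.one_le_exp (div_nonneg_of_nonpos (by nlinarith) (by linarith))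
  -- Unlike the usual `t = ε / D`, this `t` keeps `t m < 3` also when `W = 0`, and it still
  -- makes the Chernoff exponent exactly `-ε² / (2 D)`.
  set D' := W + 2 * m * ε / 3 with hD'
  have hD'0 : 0 < D' := by linarith [mul_nonneg hm hε]
  obtain ⟨t, htD⟩ : ∃ t, t * D' = ε := ⟨ε / D', div_mul_cancel₀ ε hD'0.ne'⟩
  have ht : 0 ≤ t := nonneg_of_mul_nonneg_left (htD ▸ hε) hD'0
  have htm : t * m < 3 := by nlinarith
  have hK : 1 - t * m / 3 = D / D' := by
    rw [eq_div_iff hD'0.ne']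
    linear_combination hD' - hD - m / 3 * htD
  calc μ.real {ω | μ[X] + ε ≤ X ω} ≤ Real.exp (-t * (μ[X] + ε)) * mgf X μ t :=
        measure_ge_le_exp_mul_mgf _ ht (hint t)
    _ ≤ Real.exp (-t * (μ[X] + ε)) *
          Real.exp (t * μ[X] + W * t ^ 2 / (2 * (1 - t * m / 3))) := by
        gcongr
        exact hmgf t ht htm
    _ = Real.exp (-ε ^ 2 / (2 * D)) := by
        rw [← Real.exp_add, hK]
        congr 1
        have := hD0.ne'
        have := hD'0.ne'
        field_simp
        linear_combination (W * t - ε) * htD + t * ε * (hD' - 2 * hD)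

section Prod

variable {α β : Type*} [MeasurableSpace α] [MeasurableSpace β] {μ : Measure α} {ν : Measure β}
  {H : α × β → ℝ} {m : ℝ}

lemma ae_prod_abs_sub_integral_snd_le [SFinite ν] (hH : Measurable H)
    (hsnd : ∀ x, ∀ᵐ y ∂ν, |H (x, y) - ∫ y', H (x, y') ∂ν| ≤ m) :
    ∀ᵐ z ∂μ.prod ν, |H z - ∫ y, H (z.1, y) ∂ν| ≤ m :=
  (Measure.ae_prod_iff_ae_ae (measurableSet_le
    (hH.sub (hH.stronglyMeasurable.integral_prod_right'.measurable.comp measurable_fst)).abs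
    measurable_const)).2 (ae_of_all _ hsnd)

lemma ae_ae_abs_sub_integral_snd_le [SFinite μ] [SFinite ν] (hH : Measurable H)
    (hsnd : ∀ x, ∀ᵐ y ∂ν, |H (x, y) - ∫ y', H (x, y') ∂ν| ≤ m) :
    ∀ᵐ y ∂ν, ∀ᵐ x ∂μ, |H (x, y) - ∫ y', H (x, y') ∂ν| ≤ m := by
  have hset : MeasurableSet {z : α × β | |H z - ∫ y, H (z.1, y) ∂ν| ≤ m} := measurableSet_le
    (hH.sub (hH.stronglyMeasurable.integral_prod_right'.measurable.comp measurable_fst)).abs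
    measurable_const
  exact (Measure.ae_ae_comm hset).1 (ae_of_all _ hsnd)

lemma ae_prod_abs_sub_integral_fst_le [SFinite μ] [SFinite ν] (hH : Measurable H)
    (hfst : ∀ y, ∀ᵐ x ∂μ, |H (x, y) - ∫ x', H (x', y) ∂μ| ≤ m) :
    ∀ᵐ z ∂μ.prod ν, |H z - ∫ x, H (x, z.2) ∂μ| ≤ m := by
  have hset : MeasurableSet {z : α × β | |H z - ∫ x, H (x, z.2) ∂μ| ≤ m} := measurableSet_le
    (hH.sub (hH.stronglyMeasurable.integral_prod_left'.measurable.comp measurable_snd)).abs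
    measurable_const
  exact (Measure.ae_prod_iff_ae_ae hset).2 ((Measure.ae_ae_comm hset).2 (ae_of_all _ hfst))

/-- The two partial averages of `H` are within `2 m` of each other, hence `H` stays within `3 m`
of a constant. -/
lemma integrable_prod_of_abs_sub_integral_le [IsProbabilityMeasure μ] [IsProbabilityMeasure ν]
    (hH : Measurable H) (hsnd : ∀ x, ∀ᵐ y ∂ν, |H (x, y) - ∫ y', H (x, y') ∂ν| ≤ m)
    (hfst : ∀ y, ∀ᵐ x ∂μ, |H (x, y) - ∫ x', H (x', y) ∂μ| ≤ m) :
    Integrable H (μ.prod ν) := by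
  have hsnd' := ae_prod_abs_sub_integral_snd_le (μ := μ) hH hsnd
  have hfst' := ae_prod_abs_sub_integral_fst_le (ν := ν) hH hfst
  obtain ⟨x₀, hx₀⟩ := (Measure.ae_ae_of_ae_prod (hsnd'.and hfst')).exists
  have hconst : ∀ᵐ y ∂ν, |∫ x, H (x, y) ∂μ - ∫ y', H (x₀, y') ∂ν| ≤ 2 * m := by
    filter_upwards [hx₀] with y ⟨h₁, h₂⟩
    exact (abs_sub_le _ (H (x₀, y)) _).trans (by rw [abs_sub_comm]; linarith)
  refine integrable_of_ae_abs_sub_le hH.aestronglyMeasurable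
    (c := ∫ y', H (x₀, y') ∂ν) (m := 3 * m) ?_
  filter_upwards [hfst', Measure.quasiMeasurePreserving_snd.ae hconst] with z h₁ h₂
  exact (abs_sub_le _ _ _).trans (by linarith)

lemma ae_abs_integral_fst_sub_integral_le [IsProbabilityMeasure μ] [SFinite ν]
    (hH : Measurable H) (hHi : Integrable H (μ.prod ν))
    (hsnd : ∀ x, ∀ᵐ y ∂ν, |H (x, y) - ∫ y', H (x, y') ∂ν| ≤ m) :
    ∀ᵐ y ∂ν, |∫ x, H (x, y) ∂μ - ∫ y', ∫ x, H (x, y') ∂μ ∂ν| ≤ m := by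
  rw [← integral_prod_symm H hHi, integral_prod H hHi]
  filter_upwards [ae_ae_abs_sub_integral_snd_le (μ := μ) hH hsnd, hHi.prod_left_ae] with y hy hint
  rw [← integral_sub hint hHi.integral_prod_left]
  simpa using norm_integral_le_of_norm_le_const (μ := μ)
    (f := fun x => H (x, y) - ∫ y', H (x, y') ∂ν) (by simpa only [Real.norm_eq_abs] using hy)

lemma variance_integral_fst_le [IsProbabilityMeasure μ] [IsProbabilityMeasure ν]
    (hH : Measurable H) (hHi : Integrable H (μ.prod ν))
    (hsnd : ∀ x, ∀ᵐ y ∂ν, |H (x, y) - ∫ y', H (x, y') ∂ν| ≤ m) :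
    variance (fun y => ∫ x, H (x, y) ∂μ) ν ≤ ∫ x, variance (fun y => H (x, y)) ν ∂μ := by
  set c : α → ℝ := fun x => ∫ y, H (x, y) ∂ν
  have hc : Measurable c := hH.stronglyMeasurable.integral_prod_right'.measurable
  have hD : Measurable fun z : α × β => H z - c z.1 := hH.sub (hc.comp measurable_fst)
  have hD2 : Integrable (fun z : α × β => (H z - c z.1) ^ 2) (μ.prod ν) :=
    (memLp_of_ae_abs_sub_le hD.aestronglyMeasurable (c := 0)
      (by simpa using ae_prod_abs_sub_integral_snd_le hH hsnd) 2).integrable_sq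
  calc variance (fun y => ∫ x, H (x, y) ∂μ) ν
      = variance (fun y => ∫ x, H (x, y) ∂μ - ∫ x, c x ∂μ) ν :=
        (variance_sub_const hH.stronglyMeasurable.integral_prod_left'.aestronglyMeasurable _).symm
    _ ≤ ∫ y, (∫ x, H (x, y) ∂μ - ∫ x, c x ∂μ) ^ 2 ∂ν := variance_le_expectation_sq
        (hH.stronglyMeasurable.integral_prod_left'.measurable.sub_const _).aestronglyMeasurable
    _ ≤ ∫ y, ∫ x, (H (x, y) - c x) ^ 2 ∂μ ∂ν := by
        refine integral_mono_of_nonneg (ae_of_all _ fun _ => sq_nonneg _)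
          hD2.integral_prod_right ?_
        filter_upwards [ae_ae_abs_sub_integral_snd_le (μ := μ) hH hsnd, hHi.prod_left_ae]
          with y hy hint
        rw [← integral_sub hint hHi.integral_prod_left]
        exact sq_integral_le_integral_sq (memLp_of_ae_abs_sub_le
          (hD.comp measurable_prodMk_right).aestronglyMeasurable (c := 0) (by simpa using hy) 2)
    _ = ∫ x, ∫ y, (H (x, y) - c x) ^ 2 ∂ν ∂μ :=
        (integral_prod_symm _ hD2).symm.trans (integral_prod _ hD2)
    _ = ∫ x, variance (fun y => H (x, y)) ν ∂μ := integral_congr_ae <| ae_of_all _ fun x =>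
        (variance_eq_integral (hH.comp measurable_prodMk_left).aemeasurable).symm

end Prod

def HasCoordDeviationLE {n : ℕ} {Ωi : Fin n → Type*} [∀ i, MeasurableSpace (Ωi i)]
    (μ : ∀ i, Measure (Ωi i)) (f : (∀ i, Ωi i) → ℝ) (m : ℝ) : Prop :=
  ∀ i x, ∀ᵐ y ∂μ i, |f (Function.update x i y) - ∫ y', f (Function.update x i y') ∂μ i| ≤ m

def HasCoordVarianceLE {n : ℕ} {Ωi : Fin n → Type*} [∀ i, MeasurableSpace (Ωi i)]
    (μ : ∀ i, Measure (Ωi i)) (f : (∀ i, Ωi i) → ℝ) (w : Fin n → ℝ) : Prop :=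
  ∀ i x, variance (fun y => f (Function.update x i y)) (μ i) ≤ w i

section Cons

variable {n : ℕ} {Ωi : Fin (n + 1) → Type*} [∀ i, MeasurableSpace (Ωi i)]

def consMeasurableEquiv : (Ωi 0 × ∀ j : Fin n, Ωi j.succ) ≃ᵐ ∀ i, Ωi i where
  toEquiv := Fin.consEquiv Ωi
  measurable_toFun := measurable_pi_iff.2 fun i => by
    refine Fin.cases ?_ (fun j => ?_) i
    · simpa using measurable_fst
    · exact (measurable_pi_apply j).comp measurable_snd
  measurable_invFun :=
    (measurable_pi_apply 0).prodMk (measurable_pi_iff.2 fun j => measurable_pi_apply _)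

@[simp]
lemma consMeasurableEquiv_apply (p : Ωi 0 × ∀ j : Fin n, Ωi j.succ) :
    consMeasurableEquiv p = Fin.cons p.1 p.2 :=
  rfl

noncomputable def headAverage (μ : ∀ i, Measure (Ωi i)) (f : (∀ i, Ωi i) → ℝ)
    (y : ∀ j : Fin n, Ωi j.succ) : ℝ :=
  ∫ x, f (Fin.cons x y) ∂μ 0

variable {μ : ∀ i, Measure (Ωi i)} {f : (∀ i, Ωi i) → ℝ} {m : ℝ}

lemma measurable_cons_update (hf : Measurable f) (i : Fin n) (x : ∀ j : Fin n, Ωi j.succ) :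
    Measurable fun p : Ωi 0 × Ωi i.succ => f (Fin.cons p.1 (Function.update x i p.2)) :=
  hf.comp (consMeasurableEquiv.measurable.comp
    (measurable_fst.prodMk ((measurable_update x).comp measurable_snd)))

lemma HasCoordDeviationLE.cons_update (hdev : HasCoordDeviationLE μ f m) (i : Fin n)
    (x : ∀ j : Fin n, Ωi j.succ) (a : Ωi 0) :
    ∀ᵐ y ∂μ i.succ, |f (Fin.cons a (Function.update x i y)) -
      ∫ y', f (Fin.cons a (Function.update x i y')) ∂μ i.succ| ≤ m := by
  simpa only [Fin.cons_update] using hdev i.succ (Fin.cons a x)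

variable [∀ i, IsProbabilityMeasure (μ i)]

lemma measurePreserving_consMeasurableEquiv :
    MeasurePreserving consMeasurableEquiv ((μ 0).prod (Measure.pi fun j => μ j.succ))
      (Measure.pi μ) := by
  refine ⟨MeasurableEquiv.measurable _, (Measure.pi_eq fun s hs => ?_).symm⟩
  have hpre : consMeasurableEquiv ⁻¹' Set.univ.pi s =
      s 0 ×ˢ Set.univ.pi fun j : Fin n => s j.succ := by
    ext p
    simp [Fin.forall_fin_succ]
  rw [MeasurableEquiv.map_apply, hpre, Measure.prod_prod, Measure.pi_pi, Fin.prod_univ_succ]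

lemma ae_pi_succ_iff {p : (∀ i, Ωi i) → Prop} :
    (∀ᵐ x ∂Measure.pi μ, p x) ↔
      ∀ᵐ z ∂(μ 0).prod (Measure.pi fun j => μ j.succ), p (Fin.cons z.1 z.2) := by
  rw [← (measurePreserving_consMeasurableEquiv (μ := μ)).map_eq,
    consMeasurableEquiv.measurableEmbedding.ae_map_iff]
  simp only [consMeasurableEquiv_apply]

lemma integral_pi_succ {F : (∀ i, Ωi i) → ℝ} (hF : Integrable F (Measure.pi μ)) :
    ∫ x, F x ∂Measure.pi μ = ∫ y, headAverage μ F y ∂Measure.pi fun j => μ j.succ := by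
  have hmp := measurePreserving_consMeasurableEquiv (μ := μ)
  rw [← hmp.integral_comp', integral_prod_symm]
  · simp only [consMeasurableEquiv_apply, headAverage]
  · exact (hmp.integrable_comp_emb consMeasurableEquiv.measurableEmbedding).2 hF

lemma measurable_headAverage (hf : Measurable f) : Measurable (headAverage μ f) :=
  (hf.comp consMeasurableEquiv.measurable).stronglyMeasurable.integral_prod_left'.measurable

lemma HasCoordDeviationLE.ae_abs_sub_headAverage_le (hdev : HasCoordDeviationLE μ f m)
    (y : ∀ j : Fin n, Ωi j.succ) : ∀ᵐ x ∂μ 0, |f (Fin.cons x y) - headAverage μ f y| ≤ m := by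
  obtain ⟨a⟩ := nonempty_of_isProbabilityMeasure (μ 0)
  simpa [Fin.update_cons_zero, headAverage] using hdev 0 (Fin.cons a y)

lemma HasCoordDeviationLE.ae_prod_abs_sub_headAverage_le (hf : Measurable f)
    (hdev : HasCoordDeviationLE μ f m) :
    ∀ᵐ z ∂(μ 0).prod (Measure.pi fun j => μ j.succ),
      |f (Fin.cons z.1 z.2) - headAverage μ f z.2| ≤ m :=
  ae_prod_abs_sub_integral_fst_le (H := fun z => f (Fin.cons z.1 z.2))
    (hf.comp consMeasurableEquiv.measurable) hdev.ae_abs_sub_headAverage_le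

lemma HasCoordDeviationLE.integrable_cons_update (hf : Measurable f)
    (hdev : HasCoordDeviationLE μ f m) (i : Fin n) (x : ∀ j : Fin n, Ωi j.succ) :
    Integrable (fun p : Ωi 0 × Ωi i.succ => f (Fin.cons p.1 (Function.update x i p.2)))
      ((μ 0).prod (μ i.succ)) :=
  integrable_prod_of_abs_sub_integral_le (measurable_cons_update hf i x) (hdev.cons_update i x)
    fun y => hdev.ae_abs_sub_headAverage_le (Function.update x i y)

lemma hasCoordDeviationLE_headAverage (hf : Measurable f) (hdev : HasCoordDeviationLE μ f m) :
    HasCoordDeviationLE (fun j => μ j.succ) (headAverage μ f) m := fun i x =>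
  ae_abs_integral_fst_sub_integral_le (measurable_cons_update hf i x)
    (hdev.integrable_cons_update hf i x) (hdev.cons_update i x)

lemma hasCoordVarianceLE_headAverage {w : Fin (n + 1) → ℝ} (hf : Measurable f)
    (hvar : HasCoordVarianceLE μ f w) (hdev : HasCoordDeviationLE μ f m) :
    HasCoordVarianceLE (fun j => μ j.succ) (headAverage μ f) (fun j => w j.succ) := fun i x =>
  calc variance (fun y => headAverage μ f (Function.update x i y)) (μ i.succ)
      ≤ ∫ a, variance (fun y => f (Fin.cons a (Function.update x i y))) (μ i.succ) ∂μ 0 :=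
        variance_integral_fst_le (H := fun p => f (Fin.cons p.1 (Function.update x i p.2)))
          (measurable_cons_update hf i x) (hdev.integrable_cons_update hf i x)
          (hdev.cons_update i x)
    _ ≤ ∫ _, w i.succ ∂μ 0 :=
        integral_mono_of_nonneg (ae_of_all _ fun _ => variance_nonneg _ _) (integrable_const _)
          (ae_of_all _ fun a => by simpa only [Fin.cons_update] using hvar i.succ (Fin.cons a x))
    _ = w i.succ := by simp

end Cons

section Pi

variable {n : ℕ} {Ωi : Fin n → Type*} [∀ i, MeasurableSpace (Ωi i)] {μ : ∀ i, Measure (Ωi i)}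
  [∀ i, IsProbabilityMeasure (μ i)] {f : (∀ i, Ωi i) → ℝ} {m : ℝ}

theorem HasCoordDeviationLE.ae_abs_sub_integral_le (hf : Measurable f)
    (hdev : HasCoordDeviationLE μ f m) :
    ∀ᵐ x ∂Measure.pi μ, |f x - ∫ x', f x' ∂Measure.pi μ| ≤ n * m := by
  induction n with
  | zero =>
    refine ae_of_all _ fun x => ?_
    have hconst : f = fun _ => f x := funext fun y => congrArg f (Subsingleton.elim y x)
    rw [hconst]
    simp
  | succ n ih =>
    have hg := ih (measurable_headAverage hf) (hasCoordDeviationLE_headAverage hf hdev)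
    set c := ∫ y, headAverage μ f y ∂Measure.pi fun j => μ j.succ
    have hc : ∀ᵐ x ∂Measure.pi μ, |f x - c| ≤ (n + 1 : ℕ) * m := by
      rw [ae_pi_succ_iff]
      filter_upwards [hdev.ae_prod_abs_sub_headAverage_le hf,
        Measure.quasiMeasurePreserving_snd.ae hg] with z h₁ h₂
      push_cast
      exact (abs_sub_le _ (headAverage μ f z.2) _).trans (by linarith)
    rwa [integral_pi_succ (integrable_of_ae_abs_sub_le hf.aestronglyMeasurable hc)]

lemma HasCoordDeviationLE.integrable (hf : Measurable f) (hdev : HasCoordDeviationLE μ f m) :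
    Integrable f (Measure.pi μ) :=
  integrable_of_ae_abs_sub_le hf.aestronglyMeasurable (hdev.ae_abs_sub_integral_le hf)

lemma HasCoordDeviationLE.integrable_exp_mul (hf : Measurable f)
    (hdev : HasCoordDeviationLE μ f m) (t : ℝ) :
    Integrable (fun x => Real.exp (t * f x)) (Measure.pi μ) :=
  integrable_exp_mul_of_ae_abs_sub_le hf.aemeasurable (hdev.ae_abs_sub_integral_le hf) t

theorem HasCoordVarianceLE.mgf_le {w : Fin n → ℝ} (hf : Measurable f)
    (hvar : HasCoordVarianceLE μ f w) (hdev : HasCoordDeviationLE μ f m) {t : ℝ} (ht : 0 ≤ t)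
    (htm : t * m < 3) :
    mgf f (Measure.pi μ) t ≤
      Real.exp (t * ∫ x, f x ∂Measure.pi μ + (∑ i, w i) * t ^ 2 / (2 * (1 - t * m / 3))) := by
  induction n with
  | zero =>
    obtain ⟨x⟩ := nonempty_of_isProbabilityMeasure (Measure.pi μ)
    have hconst : f = fun _ => f x := funext fun y => congrArg f (Subsingleton.elim y x)
    rw [hconst]
    simp [mgf]
  | succ n ih =>
    set K := 2 * (1 - t * m / 3)
    set ν := Measure.pi fun j : Fin n => μ j.succ
    have hg := ih (measurable_headAverage hf) (hasCoordVarianceLE_headAverage hf hvar hdev)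
      (hasCoordDeviationLE_headAverage hf hdev)
    have hinner (y : ∀ j : Fin n, Ωi j.succ) : headAverage μ (fun x => Real.exp (t * f x)) y ≤
        Real.exp (t * headAverage μ f y) * Real.exp (w 0 * t ^ 2 / K) := by
      obtain ⟨a⟩ := nonempty_of_isProbabilityMeasure (μ 0)
      have hvar0 : variance (fun x => f (Fin.cons x y)) (μ 0) ≤ w 0 := by
        simpa only [Fin.update_cons_zero] using hvar 0 (Fin.cons a y)
      calc headAverage μ (fun x => Real.exp (t * f x)) y
          = mgf (fun x => f (Fin.cons x y)) (μ 0) t := rfl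
        _ ≤ Real.exp (t * headAverage μ f y +
              variance (fun x => f (Fin.cons x y)) (μ 0) * t ^ 2 / K) :=
            mgf_le_exp_variance_of_abs_sub_le
              (hf.comp (consMeasurableEquiv.measurable.comp measurable_prodMk_right)).aemeasurable
              ht htm (hdev.ae_abs_sub_headAverage_le y)
        _ ≤ Real.exp (t * headAverage μ f y + w 0 * t ^ 2 / K) := by
            gcongr
            simp only [K]
            linarith
        _ = _ := Real.exp_add _ _
    have hgf : ∫ y, headAverage μ f y ∂ν = ∫ x, f x ∂Measure.pi μ :=
      (integral_pi_succ (hdev.integrable hf)).symm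
    calc mgf f (Measure.pi μ) t
        = ∫ y, headAverage μ (fun x => Real.exp (t * f x)) y ∂ν :=
          integral_pi_succ (hdev.integrable_exp_mul hf t)
      _ ≤ ∫ y, Real.exp (t * headAverage μ f y) * Real.exp (w 0 * t ^ 2 / K) ∂ν :=
          integral_mono_of_nonneg
            (ae_of_all _ fun _ => integral_nonneg fun _ => (Real.exp_pos _).le)
            (((hasCoordDeviationLE_headAverage hf hdev).integrable_exp_mul
              (measurable_headAverage hf) t).mul_const _) (ae_of_all _ hinner)
      _ = mgf (headAverage μ f) ν t * Real.exp (w 0 * t ^ 2 / K) := integral_mul_const _ _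
      _ ≤ Real.exp (t * ∫ y, headAverage μ f y ∂ν + (∑ j : Fin n, w j.succ) * t ^ 2 / K) *
            Real.exp (w 0 * t ^ 2 / K) := by gcongr
      _ = _ := by
          rw [hgf, ← Real.exp_add, Fin.sum_univ_succ]
          ring_nf

theorem HasCoordVarianceLE.measureReal_ge_le {w : Fin n → ℝ} (hf : Measurable f)
    (hvar : HasCoordVarianceLE μ f w) (hdev : HasCoordDeviationLE μ f m) {ε : ℝ} (hε : 0 < ε) :
    (Measure.pi μ).real {x | ∫ x', f x' ∂Measure.pi μ + ε ≤ f x} ≤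
      Real.exp (-ε ^ 2 / (2 * (∑ i, w i + m * ε / 3))) := by
  have hbdd := hdev.ae_abs_sub_integral_le hf
  rcases le_or_gt 0 m with hm | hm
  · exact measureReal_ge_le_exp_of_mgf_le hm hε.le (hdev.integrable_exp_mul hf)
      fun t ht htm => hvar.mgf_le hf hdev ht htm
  -- For `m < 0` the deviation bound forces `f = ∫ f` almost everywhere.
  have hnull : ∀ᵐ x ∂Measure.pi μ, x ∉ {x | ∫ x', f x' ∂Measure.pi μ + ε ≤ f x} := by
    filter_upwards [hbdd] with x hx
    have : (n : ℝ) * m ≤ 0 := mul_nonpos_of_nonneg_of_nonpos n.cast_nonneg hm.le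
    simp only [not_le]
    linarith [le_abs_self (f x - ∫ x', f x' ∂Measure.pi μ)]
  rw [measureReal_def, measure_eq_zero_iff_ae_notMem.2 hnull, ENNReal.toReal_zero]
  positivity

end Pi

end ProbabilityTheory

theorem variance_mcdiarmid_general
    {n : ℕ} {Ωi : Fin n → Type*} [∀ i, MeasurableSpace (Ωi i)]
    {Ω : Type*} [MeasurableSpace Ω] (P : Measure Ω) [IsProbabilityMeasure P]
    (X : ∀ i, Ω → Ωi i) (hmeas : ∀ i, Measurable (X i))
    (hindep : iIndepFun X P)
    (f : (∀ i, Ωi i) → ℝ) (hf : Measurable f)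
    (m : ℝ) (v : Fin n → ℝ)
    (hvar : ∀ i (x : ∀ i', Ωi i'),
      variance (fun ω => f (Function.update x i (X i ω))) P ≤ v i ^ 2)
    (hdev : ∀ i (x : ∀ i', Ωi i'),
      ∀ᵐ ω ∂P, |f (Function.update x i (X i ω)) -
        ∫ ω', f (Function.update x i (X i ω')) ∂P| ≤ m)
    (ε : ℝ) (hε : 0 < ε) :
    P {ω | (∫ ω', f (fun i => X i ω') ∂P) + ε ≤ f fun i => X i ω} ≤
      ENNReal.ofReal
        (Real.exp (-(ε ^ 2) / (2 * (∑ i, v i ^ 2 + m * ε / 3)))) := by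
  set μ := fun i => P.map (X i)
  have : ∀ i, IsProbabilityMeasure (μ i) := fun i =>
    Measure.isProbabilityMeasure_map (hmeas i).aemeasurable
  have hX : Measurable fun ω i => X i ω := measurable_pi_lambda _ hmeas
  have hP : P.map (fun ω i => X i ω) = Measure.pi μ :=
    (iIndepFun_iff_map_fun_eq_pi_map fun i => (hmeas i).aemeasurable).1 hindep
  have hsec (i : Fin n) (x : ∀ i', Ωi i') : Measurable fun y => f (Function.update x i y) :=
    hf.comp (measurable_update x)
  have hvar' : HasCoordVarianceLE μ f fun i => v i ^ 2 := fun i x => by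
    rw [variance_map (hsec i x).aemeasurable (hmeas i).aemeasurable]
    exact hvar i x
  have hdev' : HasCoordDeviationLE μ f m := fun i x => by
    rw [integral_map (hmeas i).aemeasurable (hsec i x).aestronglyMeasurable,
      ae_map_iff (hmeas i).aemeasurable (measurableSet_le (by fun_prop) measurable_const)]
    exact hdev i x
  have hmean : ∫ ω, f (fun i => X i ω) ∂P = ∫ x, f x ∂Measure.pi μ := by
    rw [← hP, integral_map hX.aemeasurable hf.aestronglyMeasurable]
  rw [hmean]
  change P ((fun ω i => X i ω) ⁻¹' {x | ∫ x', f x' ∂Measure.pi μ + ε ≤ f x}) ≤ _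
  rw [← Measure.map_apply hX (measurableSet_le measurable_const hf), hP, ← ofReal_measureReal]
  exact ENNReal.ofReal_le_ofReal (hvar'.measureReal_ge_le hf hdev' hε)

/-- variance-type McDiarmid inequality. For independent
`X_1, …, X_n` and `f` with coordinatewise variance at most `v_i²` and
coordinatewise deviations bounded by `m`, one has
`P[f(X) - E[f(X)] ≥ ε] ≤ exp(-ε²/(2(∑ v_i² + mε/3)))`. -/
theorem variance_mcdiarmid
    {n : ℕ} {Ωi : Fin n → Type*} [∀ i, MeasurableSpace (Ωi i)]
    {Ω : Type*} [MeasurableSpace Ω] (P : Measure Ω) [IsProbabilityMeasure P]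
    (X : ∀ i, Ω → Ωi i) (hmeas : ∀ i, Measurable (X i))
    (hindep : iIndepFun X P)
    (f : (∀ i, Ωi i) → ℝ) (hf : Measurable f)
    (hint : Integrable (fun ω => f fun i => X i ω) P)
    (m : ℝ) (v : Fin n → ℝ)
    (hvar : ∀ i (x : ∀ i', Ωi i'),
      variance (fun ω => f (Function.update x i (X i ω))) P ≤ v i ^ 2)
    (hdev : ∀ i (x : ∀ i', Ωi i'),
      ∀ᵐ ω ∂P, |f (Function.update x i (X i ω)) -
        ∫ ω', f (Function.update x i (X i ω')) ∂P| ≤ m)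
    (ε : ℝ) (hε : 0 < ε) :
    P {ω | (∫ ω', f (fun i => X i ω') ∂P) + ε ≤ f fun i => X i ω} ≤
      ENNReal.ofReal
        (Real.exp (-(ε ^ 2) / (2 * (∑ i, v i ^ 2 + m * ε / 3)))) :=
  variance_mcdiarmid_general P X hmeas hindep f hf m v hvar hdev ε hε
end

section
/- (Bernoulli perturbation bound.) Let A, B, C be random variables with B ∼ Bernoulli(ω) independent of (A,C), and let F be a real-valued function with |F(A,1,C) − F(A,0,C)| ≤ δ a.s. Define U = E[F(A,B,C) | A,B] − E[F(A,B,C) | A]. Then E[U | A] = 0, U ≤ δ a.s., and E[U² | A] ≤ ω(1−ω)δ² a.s. -/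
/-!
Write `F(A,B,C) = f₀ + 1_{B} d` with `f₀ = F(A,0,C)` and `d = F(A,1,C) - F(A,0,C)`, both
`σ(A,C)`-measurable. As `B` is independent of `σ(A,C) ⊇ σ(A)`, conditioning a
`σ(A,C)`-measurable function on `σ(A) ⊔ σ(B)` is the same as conditioning it on `σ(A)` (compare
set integrals on the π-system of intersections `a ∩ b`). Hence `E[F | A,B] = E[f₀|A] + 1_{B} E[d|A]`
and `E[F | A] = E[f₀|A] + ω E[d|A]`, so `U = (1_{B} - ω) E[d|A]` with `|E[d|A]| ≤ δ`, and
`E[U² | A] = E[(1_{B} - ω)²] E[d|A]² = ω(1 - ω) E[d|A]²`.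
-/

open MeasureTheory ProbabilityTheory MeasurableSpace

theorem MeasurableSpace.isPiSystem_image2_inter {Ω : Type*} (m₁ m₂ : MeasurableSpace Ω) :
    IsPiSystem (Set.image2 (· ∩ ·) {s | MeasurableSet[m₁] s} {t | MeasurableSet[m₂] t}) := by
  rintro _ ⟨a, ha, b, hb, rfl⟩ _ ⟨c, hc, d, hd, rfl⟩ -
  exact ⟨a ∩ c, ha.inter hc, b ∩ d, hb.inter hd, (Set.inter_inter_inter_comm a b c d).symm⟩

theorem MeasurableSpace.sup_eq_generateFrom_image2_inter {Ω : Type*} (m₁ m₂ : MeasurableSpace Ω) :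
    m₁ ⊔ m₂ = generateFrom (Set.image2 (· ∩ ·) {s | MeasurableSet[m₁] s}
      {t | MeasurableSet[m₂] t}) := by
  refine le_antisymm (sup_le ?_ ?_) (generateFrom_le ?_)
  · exact fun s hs => measurableSet_generateFrom ⟨s, hs, Set.univ, .univ, Set.inter_univ s⟩
  · exact fun t ht => measurableSet_generateFrom ⟨Set.univ, .univ, t, ht, Set.univ_inter t⟩
  · rintro _ ⟨s, hs, t, ht, rfl⟩
    exact (le_sup_left (b := m₂) _ hs).inter (le_sup_right (a := m₁) _ ht)

theorem indicator_one_sub_sq {Ω : Type*} (s : Set Ω) (p : ℝ) :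
    (fun x => (s.indicator 1 x - p) ^ 2) = fun x => (1 - 2 * p) * s.indicator 1 x + p ^ 2 := by
  ext x
  by_cases hx : x ∈ s <;> simp [hx]; ring

section

variable {Ω E : Type*} [NormedAddCommGroup E] [NormedSpace ℝ E]
  {m₁ m₂ m₃ mΩ : MeasurableSpace Ω} {μ : Measure Ω} {f g : Ω → E}

theorem setIntegral_eq_of_isPiSystem {C : Set (Set Ω)} (hle : m₁ ≤ mΩ)
    (hgen : m₁ = generateFrom C) (hC : IsPiSystem C) (hf : Integrable f μ) (hg : Integrable g μ)
    (huniv : ∫ x, f x ∂μ = ∫ x, g x ∂μ) (hbasic : ∀ s ∈ C, ∫ x in s, f x ∂μ = ∫ x in s, g x ∂μ)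
    {s : Set Ω} (hs : MeasurableSet[m₁] s) : ∫ x in s, f x ∂μ = ∫ x in s, g x ∂μ := by
  induction s, hs using MeasurableSpace.induction_on_inter hgen hC with
  | empty => simp
  | basic t ht => exact hbasic t ht
  | compl t ht iht =>
    rw [setIntegral_compl (hle _ ht) hf, setIntegral_compl (hle _ ht) hg, iht, huniv]
  | iUnion t hdisj ht iht =>
    rw [integral_iUnion (fun n => hle _ (ht n)) hdisj hf.integrableOn,
      integral_iUnion (fun n => hle _ (ht n)) hdisj hg.integrableOn]
    exact tsum_congr iht

variable [CompleteSpace E] [IsProbabilityMeasure μ]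

theorem setIntegral_inter_eq_measureReal_smul_of_indep (hle₁ : m₁ ≤ mΩ) (hle₂ : m₂ ≤ mΩ)
    (hindep : Indep m₁ m₂ μ) (hf : StronglyMeasurable[m₁] f) (hfint : Integrable f μ)
    {s t : Set Ω} (hs : MeasurableSet[m₁] s) (ht : MeasurableSet[m₂] t) :
    ∫ x in s ∩ t, f x ∂μ = μ.real t • ∫ x in s, f x ∂μ := by
  have hfs : Integrable (s.indicator f) μ := hfint.indicator (hle₁ _ hs)
  calc ∫ x in s ∩ t, f x ∂μ = ∫ x in t, s.indicator f x ∂μ := by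
        rw [setIntegral_indicator (hle₁ _ hs), Set.inter_comm]
    _ = ∫ x in t, μ[s.indicator f | m₂] x ∂μ := (setIntegral_condExp hle₂ hfs ht).symm
    _ = ∫ x in t, (∫ y, s.indicator f y ∂μ) ∂μ :=
        setIntegral_congr_ae (hle₂ _ ht) (by
          filter_upwards [condExp_indep_eq hle₁ hle₂ (hf.indicator hs) hindep] with x hx _
          exact hx)
    _ = μ.real t • ∫ x in s, f x ∂μ := by
        rw [setIntegral_const, integral_indicator (hle₁ _ hs)]

theorem condExp_sup_ae_eq_of_indep (h₁₂ : m₁ ≤ m₂) (hle₂ : m₂ ≤ mΩ) (hle₃ : m₃ ≤ mΩ)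
    (hindep : Indep m₂ m₃ μ) (hf : StronglyMeasurable[m₂] f) (hfint : Integrable f μ) :
    μ[f | m₁ ⊔ m₃] =ᵐ[μ] μ[f | m₁] := by
  have hle₁ : m₁ ≤ mΩ := h₁₂.trans hle₂
  refine (ae_eq_condExp_of_forall_setIntegral_eq (sup_le hle₁ hle₃) hfint
    (fun _ _ _ => integrable_condExp.integrableOn) (fun s hs _ => ?_)
    (stronglyMeasurable_condExp.mono (le_sup_left : m₁ ≤ m₁ ⊔ m₃)).aestronglyMeasurable).symm
  refine setIntegral_eq_of_isPiSystem (sup_le hle₁ hle₃) (sup_eq_generateFrom_image2_inter m₁ m₃)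
    (isPiSystem_image2_inter m₁ m₃) integrable_condExp hfint (integral_condExp hle₁) ?_ hs
  rintro _ ⟨a, ha, b, hb, rfl⟩
  rw [setIntegral_inter_eq_measureReal_smul_of_indep hle₂ hle₃ hindep
      (stronglyMeasurable_condExp.mono h₁₂) integrable_condExp (h₁₂ _ ha) hb,
    setIntegral_inter_eq_measureReal_smul_of_indep hle₂ hle₃ hindep hf hfint (h₁₂ _ ha) hb,
    setIntegral_condExp hle₁ hfint ha]

theorem condExp_indicator_ae_eq_measureReal_smul_of_indep (h₁₂ : m₁ ≤ m₂) (hle₂ : m₂ ≤ mΩ)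
    (hle₃ : m₃ ≤ mΩ) (hindep : Indep m₂ m₃ μ) (hf : StronglyMeasurable[m₂] f)
    (hfint : Integrable f μ) {s : Set Ω} (hs : MeasurableSet[m₃] s) :
    μ[s.indicator f | m₁] =ᵐ[μ] μ.real s • μ[f | m₁] := by
  have hle₁ : m₁ ≤ mΩ := h₁₂.trans hle₂
  refine (ae_eq_condExp_of_forall_setIntegral_eq hle₁ (hfint.indicator (hle₃ _ hs))
    (fun _ _ _ => (integrable_condExp.smul _).integrableOn) (fun t ht _ => ?_)
    (stronglyMeasurable_condExp.const_smul _).aestronglyMeasurable).symm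
  rw [setIntegral_indicator (hle₃ _ hs),
    setIntegral_inter_eq_measureReal_smul_of_indep hle₂ hle₃ hindep hf hfint (h₁₂ _ ht) hs,
    Pi.smul_def, integral_smul, setIntegral_condExp hle₁ hfint ht]

theorem condExp_condExp_sub_condExp_ae_eq_zero (h₁₂ : m₁ ≤ m₂) (hle₂ : m₂ ≤ mΩ) :
    μ[μ[f | m₂] - μ[f | m₁] | m₁] =ᵐ[μ] 0 := by
  have hle₁ : m₁ ≤ mΩ := h₁₂.trans hle₂
  filter_upwards [condExp_sub (integrable_condExp (m := m₂) (f := f)) integrable_condExp m₁,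
    condExp_condExp_of_le (μ := μ) (f := f) h₁₂ hle₂] with x hsub htower
  rw [hsub, Pi.sub_apply, htower,
    condExp_of_stronglyMeasurable hle₁ stronglyMeasurable_condExp integrable_condExp, sub_self,
    Pi.zero_apply]

theorem condExp_sup_sub_condExp_ae_eq (h₁₂ : m₁ ≤ m₂) (hle₂ : m₂ ≤ mΩ) (hle₃ : m₃ ≤ mΩ)
    (hindep : Indep m₂ m₃ μ) {f₀ d : Ω → E} (hf₀ : StronglyMeasurable[m₂] f₀)
    (hf₀int : Integrable f₀ μ) (hd : StronglyMeasurable[m₂] d) (hdint : Integrable d μ)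
    {s : Set Ω} (hs : MeasurableSet[m₃] s) :
    μ[f₀ + s.indicator d | m₁ ⊔ m₃] - μ[f₀ + s.indicator d | m₁]
      =ᵐ[μ] fun x => (s.indicator 1 x - μ.real s) • μ[d | m₁] x := by
  have hsd : Integrable (s.indicator d) μ := hdint.indicator (hle₃ _ hs)
  filter_upwards [condExp_add hf₀int hsd (m₁ ⊔ m₃), condExp_add hf₀int hsd m₁,
    condExp_sup_ae_eq_of_indep h₁₂ hle₂ hle₃ hindep hf₀ hf₀int,
    condExp_sup_ae_eq_of_indep h₁₂ hle₂ hle₃ hindep hd hdint,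
    condExp_indicator hdint (le_sup_right (a := m₁) _ hs),
    condExp_indicator_ae_eq_measureReal_smul_of_indep h₁₂ hle₂ hle₃ hindep hd hdint hs]
    with x hsup hsub hf₀sup hdsup hind hindsub
  simp only [Pi.sub_apply, Pi.add_apply, hsup, hsub, hf₀sup, hind, Pi.smul_apply, hindsub]
  by_cases hx : x ∈ s
  · simp [hx, hdsup, sub_smul]
  · simp [hx]

theorem integral_indicator_one_sub_measureReal_sq {s : Set Ω} (hs : MeasurableSet s) :
    ∫ x, (s.indicator 1 x - μ.real s) ^ 2 ∂μ = μ.real s * (1 - μ.real s) := by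
  rw [indicator_one_sub_sq,
    integral_add ((integrable_const _).indicator hs |>.const_mul _) (integrable_const _),
    integral_const_mul, integral_indicator_one hs, integral_const, probReal_univ, one_smul]
  ring

theorem abs_indicator_one_sub_measureReal_le_one (s : Set Ω) (x : Ω) :
    |s.indicator 1 x - μ.real s| ≤ 1 := by
  have h₀ : 0 ≤ μ.real s := measureReal_nonneg
  have h₁ : μ.real s ≤ 1 := measureReal_le_one
  rw [abs_le]
  by_cases hx : x ∈ s <;> simp only [hx, Set.indicator_of_mem, Set.indicator_of_notMem,
    Pi.one_apply, not_false_eq_true] <;> constructor <;> linarith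

theorem condExp_indicator_sub_mul_sq_ae_eq (hle₁ : m₁ ≤ mΩ) (hle₃ : m₃ ≤ mΩ)
    (hindep : Indep m₁ m₃ μ) {s : Set Ω} (hs : MeasurableSet[m₃] s) {g : Ω → ℝ}
    (hg : StronglyMeasurable[m₁] g) (hg2 : Integrable (g ^ 2) μ) :
    μ[fun x => ((s.indicator 1 x - μ.real s) * g x) ^ 2 | m₁]
      =ᵐ[μ] fun x => μ.real s * (1 - μ.real s) * g x ^ 2 := by
  set b : Ω → ℝ := fun x => (s.indicator 1 x - μ.real s) ^ 2
  have hb_eq : b = fun x => (1 - 2 * μ.real s) * s.indicator 1 x + μ.real s ^ 2 :=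
    indicator_one_sub_sq s _
  have hb : StronglyMeasurable[m₃] b := hb_eq ▸
    ((stronglyMeasurable_const.indicator hs).const_mul _).add stronglyMeasurable_const
  have hbint : Integrable b μ := hb_eq ▸
    (((integrable_const 1).indicator (hle₃ _ hs)).const_mul _).add (integrable_const _)
  have hprod : (fun x => ((s.indicator 1 x - μ.real s) * g x) ^ 2) = g ^ 2 * b := by
    ext x; simp only [Pi.mul_apply, Pi.pow_apply, b]; ring
  have hprodint : Integrable (g ^ 2 * b) μ := by
    refine hg2.mul_bdd (hb.mono hle₃).aestronglyMeasurable (c := 1) (.of_forall fun x => ?_)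
    rw [Real.norm_eq_abs, abs_pow]
    exact pow_le_one₀ (abs_nonneg _) (abs_indicator_one_sub_measureReal_le_one s x)
  rw [hprod]
  filter_upwards [condExp_mul_of_stronglyMeasurable_left (hg.pow 2) hprodint hbint,
    condExp_indep_eq hle₃ hle₁ hb hindep.symm] with x hpull hconst
  rw [hpull, Pi.mul_apply, hconst, integral_indicator_one_sub_measureReal_sq (hle₃ _ hs)]
  simp only [Pi.pow_apply]; ring

theorem condExp_sup_sub_condExp_bounds_of_indep (h₁₂ : m₁ ≤ m₂) (hle₂ : m₂ ≤ mΩ)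
    (hle₃ : m₃ ≤ mΩ) (hindep : Indep m₂ m₃ μ) {f₀ d : Ω → ℝ} (hf₀ : StronglyMeasurable[m₂] f₀)
    (hf₀int : Integrable f₀ μ) (hd : StronglyMeasurable[m₂] d) (hdint : Integrable d μ)
    {δ : ℝ} (hdδ : ∀ᵐ x ∂μ, |d x| ≤ δ) {s : Set Ω} (hs : MeasurableSet[m₃] s) :
    let U := μ[f₀ + s.indicator d | m₁ ⊔ m₃] - μ[f₀ + s.indicator d | m₁]
    μ[U | m₁] =ᵐ[μ] 0 ∧ (∀ᵐ x ∂μ, U x ≤ δ) ∧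
      μ[fun x => U x ^ 2 | m₁] ≤ᵐ[μ] fun _ => μ.real s * (1 - μ.real s) * δ ^ 2 := by
  intro U
  have hle₁ : m₁ ≤ mΩ := h₁₂.trans hle₂
  set g := μ[d | m₁]
  have hU : U =ᵐ[μ] fun x => (s.indicator 1 x - μ.real s) * g x :=
    condExp_sup_sub_condExp_ae_eq h₁₂ hle₂ hle₃ hindep hf₀ hf₀int hd hdint hs
  have hg : ∀ᵐ x ∂μ, |g x| ≤ δ := ae_bdd_abs_condExp_of_ae_bdd_abs hdδ
  have hg_sq : ∀ᵐ x ∂μ, g x ^ 2 ≤ δ ^ 2 := by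
    filter_upwards [hg] with x hx using sq_le_sq' (abs_le.mp hx).1 (abs_le.mp hx).2
  refine ⟨condExp_condExp_sub_condExp_ae_eq_zero le_sup_left (sup_le hle₁ hle₃), ?_, ?_⟩
  · filter_upwards [hU, hg] with x hUx hgx
    calc U x = (s.indicator 1 x - μ.real s) * g x := hUx
      _ ≤ |s.indicator 1 x - μ.real s| * |g x| := by rw [← abs_mul]; exact le_abs_self _
      _ ≤ 1 * δ := mul_le_mul (abs_indicator_one_sub_measureReal_le_one s x) hgx
          (abs_nonneg _) zero_le_one
      _ = δ := one_mul δ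
  · have hg2 : Integrable (g ^ 2) μ :=
      .of_bound ((stronglyMeasurable_condExp.mono hle₁).pow 2).aestronglyMeasurable (δ ^ 2)
        (by filter_upwards [hg_sq] with x hx; simpa using hx)
    have hp : 0 ≤ μ.real s * (1 - μ.real s) :=
      mul_nonneg measureReal_nonneg (sub_nonneg.mpr measureReal_le_one)
    have hU2 : (fun x => U x ^ 2) =ᵐ[μ] fun x => ((s.indicator 1 x - μ.real s) * g x) ^ 2 :=
      hU.fun_comp (· ^ 2)
    filter_upwards [condExp_congr_ae (m := m₁) hU2,
      condExp_indicator_sub_mul_sq_ae_eq hle₁ hle₃ (indep_of_indep_of_le_left hindep h₁₂)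
        hs stronglyMeasurable_condExp hg2, hg_sq] with x h₁ h₂ hx
    rw [h₁, h₂]
    exact mul_le_mul_of_nonneg_left hx hp

end

theorem bernoulli_perturbation_bound_general
    {Ω α γ : Type*} [MeasurableSpace Ω] [MeasurableSpace α] [MeasurableSpace γ]
    (P : Measure Ω) [IsProbabilityMeasure P]
    (A : Ω → α) (Bv : Ω → Bool) (C : Ω → γ)
    (hA : Measurable A) (hB : Measurable Bv) (hC : Measurable C)
    (w : ℝ) (hw0 : 0 ≤ w)
    (hBlaw : P {ω | Bv ω = true} = ENNReal.ofReal w)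
    (hindep : IndepFun Bv (fun ω => (A ω, C ω)) P)
    (F : α → Bool → γ → ℝ)
    (hFmeas : Measurable fun p : α × Bool × γ => F p.1 p.2.1 p.2.2)
    (hint : Integrable (fun ω => F (A ω) (Bv ω) (C ω)) P)
    (δ : ℝ)
    (hδ : ∀ᵐ ω ∂P, |F (A ω) true (C ω) - F (A ω) false (C ω)| ≤ δ) :
    let mA : MeasurableSpace Ω := MeasurableSpace.comap A inferInstance
    let mAB : MeasurableSpace Ω :=
      MeasurableSpace.comap (fun ω => (A ω, Bv ω)) inferInstance
    let U : Ω → ℝ :=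
      (MeasureTheory.condExp mAB P fun ω => F (A ω) (Bv ω) (C ω)) -
        (MeasureTheory.condExp mA P fun ω => F (A ω) (Bv ω) (C ω))
    (MeasureTheory.condExp mA P U =ᵐ[P] 0) ∧
    (∀ᵐ ω ∂P, U ω ≤ δ) ∧
    (MeasureTheory.condExp mA P (fun ω => U ω ^ 2) ≤ᵐ[P]
      fun _ => w * (1 - w) * δ ^ 2) := by
  rename_i mΩ _ _ _
  intro mA mAB U
  set mAC : MeasurableSpace Ω := MeasurableSpace.comap (fun ω => (A ω, C ω)) inferInstance
  have hAC : Measurable[mAC] fun ω => (A ω, C ω) := comap_measurable _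
  have hslice (b : Bool) : StronglyMeasurable[mAC] fun ω => F (A ω) b (C ω) :=
    ((hFmeas.comp (measurable_fst.prodMk (measurable_const.prodMk measurable_snd))).comp
      hAC).stronglyMeasurable
  have hmAC : mAC ≤ mΩ := (hA.prodMk hC).comap_le
  set d := (fun ω => F (A ω) true (C ω)) - fun ω => F (A ω) false (C ω)
  set s := {ω | Bv ω = true}
  have hs : MeasurableSet[MeasurableSpace.comap Bv inferInstance] s :=
    ⟨{true}, measurableSet_singleton true, rfl⟩
  have hF : (fun ω => F (A ω) (Bv ω) (C ω)) = (fun ω => F (A ω) false (C ω)) + s.indicator d := by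
    ext ω; cases h : Bv ω <;> simp [s, d, h]
  have hdint : Integrable d P :=
    .of_bound ((((hslice true).sub (hslice false)).mono hmAC).aestronglyMeasurable) δ hδ
  have hf₀int : Integrable (fun ω => F (A ω) false (C ω)) P := by
    simpa [hF] using hint.sub (hdint.indicator (hB.comap_le _ hs))
  have hps : P.real s = w := by rw [measureReal_def, hBlaw, ENNReal.toReal_ofReal hw0]
  have key := condExp_sup_sub_condExp_bounds_of_indep (m₁ := mA)
    (measurable_fst.comp hAC).comap_le hmAC hB.comap_le
    ((IndepFun_iff_Indep _ _ _).mp hindep).symm (hslice false) hf₀int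
    (hslice true |>.sub (hslice false)) hdint hδ hs
  rw [← hF, hps, ← MeasurableSpace.comap_prodMk] at key
  exact key

/-- Bernoulli perturbation bound. For `B ∼ Bern(ω)` independent of
`(A, C)` and `|F(A,1,C) - F(A,0,C)| ≤ δ` a.s., the martingale increment
`U = E[F(A,B,C)|A,B] - E[F(A,B,C)|A]` satisfies `E[U|A] = 0`, `U ≤ δ` and
`E[U²|A] ≤ ω(1-ω)δ²` almost surely. -/
theorem bernoulli_perturbation_bound
    {Ω α γ : Type*} [MeasurableSpace Ω] [MeasurableSpace α] [MeasurableSpace γ]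
    (P : Measure Ω) [IsProbabilityMeasure P]
    (A : Ω → α) (Bv : Ω → Bool) (C : Ω → γ)
    (hA : Measurable A) (hB : Measurable Bv) (hC : Measurable C)
    (w : ℝ) (hw0 : 0 ≤ w) (hw1 : w ≤ 1)
    (hBlaw : P {ω | Bv ω = true} = ENNReal.ofReal w)
    (hindep : IndepFun Bv (fun ω => (A ω, C ω)) P)
    (F : α → Bool → γ → ℝ)
    (hFmeas : Measurable fun p : α × Bool × γ => F p.1 p.2.1 p.2.2)
    (hint : Integrable (fun ω => F (A ω) (Bv ω) (C ω)) P)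
    (δ : ℝ)
    (hδ : ∀ᵐ ω ∂P, |F (A ω) true (C ω) - F (A ω) false (C ω)| ≤ δ) :
    let mA : MeasurableSpace Ω := MeasurableSpace.comap A inferInstance
    let mAB : MeasurableSpace Ω :=
      MeasurableSpace.comap (fun ω => (A ω, Bv ω)) inferInstance
    let U : Ω → ℝ :=
      (MeasureTheory.condExp mAB P fun ω => F (A ω) (Bv ω) (C ω)) -
        (MeasureTheory.condExp mA P fun ω => F (A ω) (Bv ω) (C ω))
    (MeasureTheory.condExp mA P U =ᵐ[P] 0) ∧
    (∀ᵐ ω ∂P, U ω ≤ δ) ∧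
    (MeasureTheory.condExp mA P (fun ω => U ω ^ 2) ≤ᵐ[P]
      fun _ => w * (1 - w) * δ ^ 2) :=
  bernoulli_perturbation_bound_general P A Bv C hA hB hC w hw0 hBlaw hindep F hFmeas hint δ hδ
end
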